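/- arXiv:1004.5183 — 8 statements merged into one kernel-verified Lean document; each statement's English description precedes it below -/
import Mathlib

section
/- If G is an n-monophilic graph and v_1,...,v_k induce a complete subgraph of G, and G' is obtained from G by adding a new vertex adjacent exactly to v_1,...,v_k, then G' is n-monophilic. -/
open SimpleGraph

open Classical in
/-- Number of proper colorings of `G` from list assignment `L`. -/
noncomputable def colCount {V : Type*} [Fintype V] (G : SimpleGraph V) (L : V → Finset ℕ) : ℕ :=
  ((Fintype.piFinset L).filter fun γ => ∀ v w, G.Adj v w → γ v ≠ γ w).card

/-- `G` is `n`-monophilic: assigning the identical list `{1,…,n}` to every vertex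
minimizes the number of list colorings among all `n`-list assignments. -/
def Monophilic {V : Type*} [Fintype V] (G : SimpleGraph V) (n : ℕ) : Prop :=
  ∀ L : V → Finset ℕ, (∀ v, (L v).card = n) →
    colCount G (fun _ => Finset.Icc 1 n) ≤ colCount G L

/-!
Every proper `L`-coloring of `G'` restricts to a proper coloring `γ` of `G`, and the colorings
over a fixed `γ` are given by the colors of `L none` not used on the clique `s`. There are
`|L none \ γ(s)| = n - |s|` of them when all lists are `{1,…,n}` (a clique gets distinct colors),
and at least `n - |s|` in general.
Summing over `γ` and using that `G` is `n`-monophilic gives the claim.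
-/

namespace SimpleGraph

variable {V : Type*}

open Classical in
noncomputable def listColorings [Fintype V] (G : SimpleGraph V) (L : V → Finset ℕ) :
    Finset (V → ℕ) :=
  (Fintype.piFinset L).filter fun γ => ∀ v w, G.Adj v w → γ v ≠ γ w

theorem colCount_eq_card_listColorings [Fintype V] (G : SimpleGraph V) (L : V → Finset ℕ) :
    colCount G L = (G.listColorings L).card :=
  rfl

theorem mem_listColorings [Fintype V] {G : SimpleGraph V} {L : V → Finset ℕ} {γ : V → ℕ} :
    γ ∈ G.listColorings L ↔ (∀ v, γ v ∈ L v) ∧ ∀ v w, G.Adj v w → γ v ≠ γ w := by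
  simp [listColorings]

theorem IsClique.injOn_of_proper {α : Type*} {G : SimpleGraph V} {s : Set V}
    (hs : G.IsClique s) {γ : V → α} (hγ : ∀ v w, G.Adj v w → γ v ≠ γ w) : s.InjOn γ :=
  fun a ha b hb hab => by_contra fun hne => hγ a b (hs ha hb hne) hab

section Cone

variable [Fintype V] {G : SimpleGraph V} {s : Finset V} {G' : SimpleGraph (Option V)}

theorem card_listColorings_fiber (hnew : ∀ a : V, G'.Adj none (some a) ↔ a ∈ s)
    (hG' : ∀ a b : V, G'.Adj (some a) (some b) ↔ G.Adj a b) (L : Option V → Finset ℕ)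
    {γ : V → ℕ} (hγ : γ ∈ G.listColorings (L ∘ some)) :
    ((G'.listColorings L).filter fun γ' => γ' ∘ some = γ).card = (L none \ s.image γ).card := by
  rw [mem_listColorings] at hγ
  refine Finset.card_bij' (fun γ' _ => γ' none) (fun c _ o => o.elim c γ) ?_ ?_ ?_ ?_
  · intro γ' hγ'
    simp only [Finset.mem_filter, mem_listColorings] at hγ'
    obtain ⟨⟨hmem, hproper⟩, rfl⟩ := hγ'
    simp only [Finset.mem_sdiff, Finset.mem_image, not_exists, not_and]
    exact ⟨hmem none, fun a ha => (hproper none (some a) ((hnew a).2 ha)).symm⟩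
  · intro c hc
    simp only [Finset.mem_sdiff, Finset.mem_image, not_exists, not_and] at hc
    simp only [Finset.mem_filter, mem_listColorings]
    refine ⟨⟨fun o => ?_, fun v w hvw => ?_⟩, rfl⟩
    · cases o with
      | none => exact hc.1
      | some a => exact hγ.1 a
    · match v, w with
      | none, none => exact absurd hvw G'.irrefl
      | none, some a => exact fun h => hc.2 a ((hnew a).1 hvw) h.symm
      | some a, none => exact hc.2 a ((hnew a).1 hvw.symm)
      | some a, some b => exact hγ.2 a b ((hG' a b).1 hvw)
  · intro γ' hγ'
    funext o
    cases o with
    | none => rfl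
    | some a => exact (congrFun (Finset.mem_filter.1 hγ').2 a).symm
  · intro c _
    rfl

theorem colCount_eq_sum_card_sdiff_image (hnew : ∀ a : V, G'.Adj none (some a) ↔ a ∈ s)
    (hG' : ∀ a b : V, G'.Adj (some a) (some b) ↔ G.Adj a b) (L : Option V → Finset ℕ) :
    colCount G' L = ∑ γ ∈ G.listColorings (L ∘ some), (L none \ s.image γ).card := by
  rw [colCount_eq_card_listColorings, Finset.card_eq_sum_card_fiberwise (f := (· ∘ some))]
  · exact Finset.sum_congr rfl fun γ hγ => card_listColorings_fiber hnew hG' L hγ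
  · intro γ' hγ'
    rw [Finset.mem_coe, mem_listColorings] at hγ' ⊢
    exact ⟨fun v => hγ'.1 (some v), fun v w hvw => hγ'.2 _ _ ((hG' v w).2 hvw)⟩

end Cone

end SimpleGraph

theorem Finset.card_sub_card_le_card_sdiff_image {α β : Type*} [DecidableEq β] (T : Finset β)
    (s : Finset α) (γ : α → β) :
    T.card - s.card ≤ (T \ s.image γ).card :=
  (Nat.sub_le_sub_left card_image_le _).trans (le_card_sdiff _ _)

theorem Finset.card_sdiff_image_of_injOn {α β : Type*} [DecidableEq β] {T : Finset β}
    {s : Finset α} {γ : α → β}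
    (hγ : Set.InjOn γ s) (hsub : ∀ a ∈ s, γ a ∈ T) :
    (T \ s.image γ).card = T.card - s.card := by
  rw [card_sdiff_of_subset (image_subset_iff.2 hsub), card_image_of_injOn hγ]

theorem stmt0 {V : Type*} [Fintype V] (G : SimpleGraph V) (n : ℕ)
    (s : Finset V) (hclique : G.IsClique ↑s)
    (hG : Monophilic G n)
    (G' : SimpleGraph (Option V))
    (hG' : ∀ a b : V, G'.Adj (some a) (some b) ↔ G.Adj a b)
    (hnew : ∀ a : V, G'.Adj none (some a) ↔ a ∈ s) :
    Monophilic G' n := by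
  intro L hL
  have hIcc : ∀ γ ∈ G.listColorings fun _ => Finset.Icc 1 n,
      (Finset.Icc 1 n \ s.image γ).card = n - s.card := fun γ hγ => by
    rw [mem_listColorings] at hγ
    rw [Finset.card_sdiff_image_of_injOn (hclique.injOn_of_proper hγ.2) fun a _ => hγ.1 a,
      Nat.card_Icc, Nat.add_sub_cancel]
  calc colCount G' (fun _ => Finset.Icc 1 n)
      = colCount G (fun _ => Finset.Icc 1 n) * (n - s.card) := by
        rw [colCount_eq_sum_card_sdiff_image hnew hG', Function.comp_def,
          Finset.sum_congr rfl hIcc, Finset.sum_const, smul_eq_mul, colCount_eq_card_listColorings]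
    _ ≤ colCount G (L ∘ some) * (n - s.card) :=
        Nat.mul_le_mul_right _ (hG _ fun v => hL (some v))
    _ = ∑ _γ ∈ G.listColorings (L ∘ some), ((L none).card - s.card) := by
        rw [Finset.sum_const, smul_eq_mul, hL none, colCount_eq_card_listColorings]
    _ ≤ colCount G' L := by
        rw [colCount_eq_sum_card_sdiff_image hnew hG']
        exact Finset.sum_le_sum fun γ _ => Finset.card_sub_card_le_card_sdiff_image _ _ γ
end

section
/- Every tree is n-monophilic for every n ≥ 1. -/
open SimpleGraph

/-!
Let `v` be a leaf of the tree `T` with neighbour `u`. A proper `L`-colouring of `T - v` extends to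
`T` in exactly `#(L v \ {γ u})` ways, which is `#(L v) - 1` when `L v ⊇ L u` (in particular for a
constant assignment) and at least `#(L v) - 1` in general. Induction on the number of vertices
then compares the constant assignment with any assignment whose lists are at least as large.
-/

open Finset

namespace SimpleGraph

variable {V : Type*} [Fintype V]

open Classical in
noncomputable def properColorings (G : SimpleGraph V) (L : V → Finset ℕ) : Finset (V → ℕ) :=
  (Fintype.piFinset L).filter fun γ => ∀ v w, G.Adj v w → γ v ≠ γ w

variable {G : SimpleGraph V}

theorem colCount_eq_card_properColorings (L : V → Finset ℕ) :
    colCount G L = #(G.properColorings L) := rfl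

@[simp]
theorem mem_properColorings {L : V → Finset ℕ} {γ : V → ℕ} :
    γ ∈ G.properColorings L ↔ (∀ v, γ v ∈ L v) ∧ ∀ v w, G.Adj v w → γ v ≠ γ w := by
  simp [properColorings]

theorem colCount_eq_prod_of_subsingleton [Subsingleton V] (L : V → Finset ℕ) :
    colCount G L = ∏ v, #(L v) := by
  have no_adj : ∀ v w, ¬ G.Adj v w := fun v w h => h.ne (Subsingleton.elim v w)
  have : G.properColorings L = Fintype.piFinset L := by
    ext γ
    simp [no_adj]
  rw [colCount_eq_card_properColorings, this, Fintype.card_piFinset]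

theorem restrict_mem_properColorings_induce {s : Set V} [Fintype s] {L : V → Finset ℕ}
    {γ : V → ℕ} (hγ : γ ∈ G.properColorings L) :
    (fun w : s => γ w) ∈ (G.induce s).properColorings (fun w => L w) := by
  rw [mem_properColorings] at hγ ⊢
  exact ⟨fun w => hγ.1 w, fun a b hab => hγ.2 a b hab⟩

theorem dite_mem_properColorings_of_leaf [DecidableEq V] {v u : V}
    (huniq : ∀ w, G.Adj v w → w = u) {L : V → Finset ℕ} {γ : ({v}ᶜ : Set V) → ℕ}
    (hγ : γ ∈ (G.induce {v}ᶜ).properColorings (fun w => L w)) {c : ℕ} (hcL : c ∈ L v)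
    (hcu : ∀ hu : u ∈ ({v}ᶜ : Set V), c ≠ γ ⟨u, hu⟩) :
    (fun w => if h : w = v then c else γ ⟨w, h⟩) ∈ G.properColorings L := by
  rw [mem_properColorings] at hγ ⊢
  refine ⟨fun w => ?_, fun a b hab => ?_⟩
  · by_cases h : w = v
    · subst h; simpa
    · simpa [h] using hγ.1 ⟨w, h⟩
  · by_cases ha : a = v <;> by_cases hb : b = v
    · exact (hab.ne (ha.trans hb.symm)).elim
    · obtain rfl := huniq b (ha ▸ hab)
      simpa [ha, hb] using hcu hb
    · obtain rfl := huniq a (hb ▸ hab.symm)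
      simpa [ha, hb] using (hcu ha).symm
    · simpa [ha, hb] using hγ.2 ⟨a, ha⟩ ⟨b, hb⟩ hab

theorem colCount_eq_sum_card_erase_of_leaf [DecidableEq V] {v u : V} (hvu : G.Adj v u)
    (huniq : ∀ w, G.Adj v w → w = u) (L : V → Finset ℕ) :
    colCount G L = ∑ γ ∈ (G.induce {v}ᶜ).properColorings (fun w => L w),
      #((L v).erase (γ ⟨u, Set.mem_compl_singleton_iff.2 hvu.ne'⟩)) := by
  rw [colCount_eq_card_properColorings, card_eq_sum_card_fiberwise
    (f := fun (γ : V → ℕ) (w : ({v}ᶜ : Set V)) => γ w)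
    fun γ hγ => restrict_mem_properColorings_induce hγ]
  refine sum_congr rfl fun γ' hγ' => ?_
  refine card_bij' (fun γ _ => γ v) (fun c _ w => if h : w = v then c else γ' ⟨w, h⟩)
    ?_ ?_ ?_ ?_
  · intro γ hγ
    simp only [mem_filter, mem_properColorings] at hγ
    obtain ⟨⟨hγL, hγG⟩, rfl⟩ := hγ
    exact mem_erase.2 ⟨hγG v u hvu, hγL v⟩
  · intro c hc
    obtain ⟨hcu, hcL⟩ := mem_erase.1 hc
    refine mem_filter.2 ⟨dite_mem_properColorings_of_leaf huniq hγ' hcL fun _ => hcu, ?_⟩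
    funext w
    exact dif_neg w.2
  · intro γ hγ
    funext w
    by_cases h : w = v
    · simp [h]
    · simp [h, ← (mem_filter.1 hγ).2]
  · intro c _
    simp

theorem colCount_eq_mul_of_leaf [DecidableEq V] {v u : V} (hvu : G.Adj v u)
    (huniq : ∀ w, G.Adj v w → w = u) {L : V → Finset ℕ} (hL : L u ⊆ L v) :
    colCount G L = (#(L v) - 1) * colCount (G.induce {v}ᶜ) (fun w => L w) := by
  rw [colCount_eq_sum_card_erase_of_leaf hvu huniq, colCount_eq_card_properColorings, mul_comm]
  exact sum_const_nat fun γ hγ => card_erase_of_mem (hL ((mem_properColorings.1 hγ).1 _))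

theorem mul_le_colCount_of_leaf [DecidableEq V] {v u : V} (hvu : G.Adj v u)
    (huniq : ∀ w, G.Adj v w → w = u) (L : V → Finset ℕ) :
    (#(L v) - 1) * colCount (G.induce {v}ᶜ) (fun w => L w) ≤ colCount G L := by
  rw [colCount_eq_sum_card_erase_of_leaf hvu huniq, colCount_eq_card_properColorings, mul_comm,
    ← smul_eq_mul]
  exact card_nsmul_le_sum _ _ _ fun γ _ => pred_card_le_card_erase

theorem IsTree.exists_leaf_isTree_induce [Nontrivial V] (hG : G.IsTree) :
    ∃ v u, G.Adj v u ∧ (∀ w, G.Adj v w → w = u) ∧ (G.induce {v}ᶜ).IsTree := by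
  classical
  obtain ⟨v, hv⟩ := hG.exists_vert_degree_one_of_nontrivial
  obtain ⟨u, hvu, huniq⟩ := degree_eq_one_iff_existsUnique_adj.1 hv
  exact ⟨v, u, hvu, huniq, hG.connected.induce_compl_singleton_of_degree_eq_one hv,
    hG.isAcyclic.induce _⟩

theorem IsTree.colCount_const_le (hG : G.IsTree) (s : Finset ℕ) {L : V → Finset ℕ}
    (hL : ∀ v, #s ≤ #(L v)) : colCount G (fun _ => s) ≤ colCount G L := by
  revert G L
  refine Fintype.induction_subsingleton_or_nontrivial (P := fun V _ => ∀ {G : SimpleGraph V},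
    G.IsTree → ∀ {L : V → Finset ℕ}, (∀ v, #s ≤ #(L v)) → colCount G (fun _ => s) ≤ colCount G L)
    V ?_ ?_
  · intro V _ _ G _ L hL
    rw [colCount_eq_prod_of_subsingleton, colCount_eq_prod_of_subsingleton]
    exact prod_le_prod' fun v _ => hL v
  · intro V _ _ ih G hG L hL
    classical
    obtain ⟨v, u, hvu, huniq, hG'⟩ := hG.exists_leaf_isTree_induce
    calc colCount G (fun _ => s)
        = (#s - 1) * colCount (G.induce {v}ᶜ) (fun _ => s) :=
          colCount_eq_mul_of_leaf hvu huniq subset_rfl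
      _ ≤ (#(L v) - 1) * colCount (G.induce {v}ᶜ) (fun w => L w) := by
          refine Nat.mul_le_mul (Nat.sub_le_sub_right (hL v) 1) (ih _ ?_ hG' fun w => hL w)
          exact Fintype.card_subtype_lt (x := v) (by simp)
      _ ≤ colCount G L := mul_le_colCount_of_leaf hvu huniq L

end SimpleGraph

theorem stmt2_general {V : Type*} [Fintype V] (G : SimpleGraph V) (hG : G.IsTree)
    (n : ℕ) : Monophilic G n := fun L hL =>
  hG.colCount_const_le _ fun v => by simp [hL]

theorem stmt2 {V : Type*} [Fintype V] (G : SimpleGraph V) (hG : G.IsTree)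
    (n : ℕ) (hn : 1 ≤ n) : Monophilic G n :=
  stmt2_general G hG n
end

section
/- Let G be a graph that is the disjoint union of subgraphs G_1 and G_2 together with one edge v_1v_2 where v_i ∈ G_i. Let L be a list assignment for G. Then there exists a list assignment L' with |L'(v)| = |L(v)| for every v, such that L'(v_1) ⊆ L'(v_2) or L'(v_2) ⊆ L'(v_1), and col(G,L') ≤ col(G,L). -/
open SimpleGraph

/-!
Say `|L(v₂) \ L(v₁)| ≤ |L(v₁) \ L(v₂)|` (otherwise exchange the sides). Choose a permutation `σ`
of the colors that fixes `L(v₁) ∩ L(v₂)` and moves `L(v₂) \ L(v₁)` into `L(v₁) \ L(v₂)`, and let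
`L'` apply `σ` to every list on the `G₂` side, so that `L'(v₂) ⊆ L'(v₁)`. Applying `σ⁻¹` on the
`G₂` side turns a proper `L'`-coloring injectively into a proper `L`-coloring: edges inside a
side stay proper, and a conflict on the bridge would be a color of `L(v₁) ∩ L(v₂)`, which `σ`
fixes, so it was already a conflict of the `L'`-coloring.
-/

open Finset Equiv

theorem Finset.exists_perm_map_subset_of_card_sdiff_le {α : Type*} [DecidableEq α]
    (A B : Finset α) (h : #(B \ A) ≤ #(A \ B)) :
    ∃ σ : Perm α, (∀ x ∈ A ∩ B, σ x = x) ∧ B.map σ.toEmbedding ⊆ A := by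
  obtain ⟨ι⟩ : Nonempty ((B \ A : Finset α) ↪ (A \ B : Finset α)) :=
    Function.Embedding.nonempty_of_card_le (by simpa using h)
  let g : B → α := fun x =>
    if hx : (x : α) ∈ A then x else ι ⟨x, mem_sdiff.2 ⟨x.2, hx⟩⟩
  have hg_mem (x : B) : g x ∈ A := by
    by_cases hx : (x : α) ∈ A
    · simp [g, hx]
    · simpa [g, hx] using (mem_sdiff.1 (ι ⟨x, mem_sdiff.2 ⟨x.2, hx⟩⟩).2).1
  have hg_inj : Function.Injective g := by
    intro x y hxy
    have hι (z : B) (hz : (z : α) ∉ A) : g z ∉ B := by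
      simpa [g, hz] using (mem_sdiff.1 (ι ⟨z, mem_sdiff.2 ⟨z.2, hz⟩⟩).2).2
    by_cases hx : (x : α) ∈ A <;> by_cases hy : (y : α) ∈ A
    · exact Subtype.ext (by simpa [g, hx, hy] using hxy)
    · exact absurd (hxy ▸ (by simp [g, hx] : g x ∈ B)) (hι y hy)
    · exact absurd (hxy ▸ (by simp [g, hy] : g y ∈ B)) (hι x hx)
    · simpa [g, hx, hy] using hxy
  obtain ⟨σ, hσ⟩ := Perm.exists_extending_pair Subtype.val g Subtype.val_injective hg_inj
  refine ⟨σ, fun x hx => ?_, fun y hy => ?_⟩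
  · obtain ⟨hxA, hxB⟩ := mem_inter.1 hx
    simpa [g, hxA] using hσ ⟨x, hxB⟩
  · obtain ⟨x, hxB, rfl⟩ := mem_map.1 hy
    simpa [hσ ⟨x, hxB⟩] using hg_mem ⟨x, hxB⟩

section BridgeRecoloring

variable {V : Type*} (P : V → Prop) [DecidablePred P]

def recolorSide (σ : Perm ℕ) (L : V → Finset ℕ) (v : V) : Finset ℕ :=
  if P v then (L v).map σ.toEmbedding else L v

theorem card_recolorSide (σ : Perm ℕ) (L : V → Finset ℕ) (v : V) :
    #(recolorSide P σ L v) = #(L v) := by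
  unfold recolorSide
  split_ifs <;> simp

variable [Fintype V] {P} {G : SimpleGraph V} {u w : V}

theorem colCount_recolorSide_le
    (hcut : ∀ a b, G.Adj a b → ¬P a → P b → a = u ∧ b = w)
    {σ : Perm ℕ} {L : V → Finset ℕ} (hσ : ∀ x ∈ L u ∩ L w, σ x = x) :
    colCount G (recolorSide P σ L) ≤ colCount G L := by
  unfold colCount
  refine card_le_card_of_injOn (fun γ v => if P v then σ.symm (γ v) else γ v) ?_ ?_
  · intro γ hγ
    simp only [coe_filter, Fintype.mem_piFinset, Set.mem_ofPred_eq] at hγ ⊢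
    obtain ⟨hmem, hproper⟩ := hγ
    have hmem' (v : V) : (if P v then σ.symm (γ v) else γ v) ∈ L v := by
      have := hmem v
      unfold recolorSide at this
      split_ifs at this ⊢
      · simpa [mem_map_equiv] using this
      · exact this
    have hcross (a b : V) (hab : G.Adj a b) (ha : ¬P a) (hb : P b) : γ a ≠ σ.symm (γ b) := by
      obtain ⟨rfl, rfl⟩ := hcut a b hab ha hb
      intro heq
      have hau : γ a ∈ L a := by simpa [ha] using hmem' a
      have haw : γ a ∈ L b := by simpa [hb, heq] using hmem' b
      have hfix := hσ _ (mem_inter.2 ⟨hau, haw⟩)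
      rw [heq, Equiv.apply_symm_apply] at hfix
      exact hproper a b hab (heq.trans hfix.symm)
    refine ⟨hmem', fun a b hab => ?_⟩
    by_cases ha : P a <;> by_cases hb : P b <;> simp only [ha, hb, if_true, if_false]
    · exact σ.symm.injective.ne (hproper a b hab)
    · exact (hcross b a hab.symm hb ha).symm
    · exact hcross a b hab ha hb
    · exact hproper a b hab
  · intro γ _ γ' _ h
    funext v
    have hv := congrFun h v
    by_cases hPv : P v <;> simp_all

theorem exists_colCount_le_of_card_sdiff_le
    (hcut : ∀ a b, G.Adj a b → ¬P a → P b → a = u ∧ b = w) (hu : ¬P u) (hw : P w)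
    (L : V → Finset ℕ) (h : #(L w \ L u) ≤ #(L u \ L w)) :
    ∃ L' : V → Finset ℕ,
      (∀ v, #(L' v) = #(L v)) ∧ L' w ⊆ L' u ∧ colCount G L' ≤ colCount G L := by
  obtain ⟨σ, hσ, hmap⟩ := exists_perm_map_subset_of_card_sdiff_le (L u) (L w) h
  refine ⟨recolorSide P σ L, card_recolorSide P σ L, ?_, colCount_recolorSide_le hcut hσ⟩
  simpa [recolorSide, hu, hw] using hmap

end BridgeRecoloring

theorem stmt3_general {V₁ V₂ : Type*} [Fintype V₁] [Fintype V₂]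
    (v₁ : V₁) (v₂ : V₂)
    (G : SimpleGraph (V₁ ⊕ V₂))
    (hbridge : ∀ (a : V₁) (b : V₂), G.Adj (.inl a) (.inr b) ↔ a = v₁ ∧ b = v₂)
    (L : V₁ ⊕ V₂ → Finset ℕ) :
    ∃ L' : V₁ ⊕ V₂ → Finset ℕ,
      (∀ v, (L' v).card = (L v).card) ∧
      (L' (.inl v₁) ⊆ L' (.inr v₂) ∨ L' (.inr v₂) ⊆ L' (.inl v₁)) ∧
      colCount G L' ≤ colCount G L := by
  have hbridge' (a : V₁) (b : V₂) : G.Adj (.inr b) (.inl a) ↔ a = v₁ ∧ b = v₂ :=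
    (G.adj_comm _ _).trans (hbridge a b)
  rcases le_total #(L (.inr v₂) \ L (.inl v₁)) #(L (.inl v₁) \ L (.inr v₂)) with h | h
  · obtain ⟨L', hcard, hsub, hle⟩ := exists_colCount_le_of_card_sdiff_le (G := G)
      (P := fun v => v.isRight)
      (by rintro (a | a) (b | b) hab ha hb <;> simp_all) (by simp) (by simp) L h
    exact ⟨L', hcard, .inr hsub, hle⟩
  · obtain ⟨L', hcard, hsub, hle⟩ := exists_colCount_le_of_card_sdiff_le (G := G)
      (P := fun v => v.isLeft)
      (by rintro (a | a) (b | b) hab ha hb <;> simp_all) (by simp) (by simp) L h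
    exact ⟨L', hcard, .inl hsub, hle⟩

theorem stmt3 {V₁ V₂ : Type*} [Fintype V₁] [Fintype V₂]
    (G₁ : SimpleGraph V₁) (G₂ : SimpleGraph V₂) (v₁ : V₁) (v₂ : V₂)
    (G : SimpleGraph (V₁ ⊕ V₂))
    (h₁ : ∀ a b : V₁, G.Adj (.inl a) (.inl b) ↔ G₁.Adj a b)
    (h₂ : ∀ a b : V₂, G.Adj (.inr a) (.inr b) ↔ G₂.Adj a b)
    (hbridge : ∀ (a : V₁) (b : V₂), G.Adj (.inl a) (.inr b) ↔ a = v₁ ∧ b = v₂)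
    (L : V₁ ⊕ V₂ → Finset ℕ) :
    ∃ L' : V₁ ⊕ V₂ → Finset ℕ,
      (∀ v, (L' v).card = (L v).card) ∧
      (L' (.inl v₁) ⊆ L' (.inr v₂) ∨ L' (.inr v₂) ⊆ L' (.inl v₁)) ∧
      colCount G L' ≤ colCount G L :=
  stmt3_general v₁ v₂ G hbridge L
end

section
/- Let L and L' be distinct list assignments for a path P such that L(v) ⊆ L'(v) for every vertex v and |L'(v)| ≥ 2 for every v. Then col(P,L) < col(P,L'). -/
open SimpleGraph

/-!
Every coloring from `L` is one from `L'`, so it suffices to find a coloring from `L'` that is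
not one from `L`. Pick a vertex `w` and a color `c ∈ L' w \ L w`, color `w` with `c`, and walk
away from `w` in both directions: each new vertex has exactly one already colored neighbour,
so a list of size at least two always leaves a color for it.
-/

lemma colCount_lt_colCount {V : Type*} [Fintype V] (G : SimpleGraph V) {L L' : V → Finset ℕ}
    (hsub : ∀ v, L v ⊆ L' v) {γ : V → ℕ} (hγ : ∀ v, γ v ∈ L' v)
    (hproper : ∀ u v, G.Adj u v → γ u ≠ γ v) {w : V} (hw : γ w ∉ L w) :
    colCount G L < colCount G L' := by
  refine Finset.card_lt_card ((Finset.ssubset_iff_of_subset ?_).mpr ⟨γ, ?_, ?_⟩)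
  · intro x hx
    simp only [Finset.mem_filter, Fintype.mem_piFinset] at hx ⊢
    exact ⟨fun v => hsub v (hx.1 v), hx.2⟩
  · simpa only [Finset.mem_filter, Fintype.mem_piFinset] using ⟨hγ, hproper⟩
  · simp only [Finset.mem_filter, Fintype.mem_piFinset, not_and]
    exact fun hγL _ => hw (hγL w)

lemma exists_seq_mem_ne (S : ℕ → Finset ℕ) (hS : ∀ k, 2 ≤ (S k).card) {c : ℕ} (hc : c ∈ S 0) :
    ∃ x : ℕ → ℕ, x 0 = c ∧ (∀ k, x k ∈ S k) ∧ ∀ k, x (k + 1) ≠ x k := by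
  choose next hnext using fun k => Finset.exists_mem_ne (hS (k + 1))
  let x : ℕ → ℕ := fun k => Nat.rec c (fun k a => next k a) k
  refine ⟨x, rfl, ?_, fun k => (hnext k (x k)).2⟩
  rintro (_ | k)
  exacts [hc, (hnext k (x k)).1]

def padList {m : ℕ} (L : Fin m → Finset ℕ) (i : ℕ) : Finset ℕ :=
  if h : i < m then L ⟨i, h⟩ else {0, 1}

lemma padList_val {m : ℕ} (L : Fin m → Finset ℕ) (v : Fin m) : padList L v = L v := by
  simp [padList]

lemma two_le_card_padList {m : ℕ} {L : Fin m → Finset ℕ} (hL : ∀ v, 2 ≤ (L v).card) (i : ℕ) :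
    2 ≤ (padList L i).card := by
  unfold padList
  split_ifs
  exacts [hL _, by simp]

lemma exists_pathGraph_coloring_eq {m : ℕ} (L : Fin m → Finset ℕ) (hL : ∀ v, 2 ≤ (L v).card)
    (w : Fin m) {c : ℕ} (hc : c ∈ L w) :
    ∃ γ : Fin m → ℕ, (∀ v, γ v ∈ L v) ∧ (∀ u v, (pathGraph m).Adj u v → γ u ≠ γ v) ∧ γ w = c := by
  have hcw : c ∈ padList L w := by rwa [padList_val]
  -- The greedy sequences run past the ends of the path (and `w - k` truncates to `0`); only
  -- their values at indices inside the path are used.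
  obtain ⟨x, hx0, hxL, hxne⟩ := exists_seq_mem_ne (fun k => padList L (w + k))
    (fun _ => two_le_card_padList hL _) hcw
  obtain ⟨y, hy0, hyL, hyne⟩ := exists_seq_mem_ne (fun k => padList L (w - k))
    (fun _ => two_le_card_padList hL _) hcw
  let γ : Fin m → ℕ := fun v => if (w : ℕ) ≤ v then x (v - w) else y (w - v)
  have hγ_right {v : Fin m} (hv : (w : ℕ) ≤ v) : γ v = x (v - w) := if_pos hv
  have hγ_left {v : Fin m} (hv : (v : ℕ) ≤ w) : γ v = y (w - v) := by
    rcases hv.lt_or_eq with hv | hv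
    · exact if_neg (by omega)
    · simp [γ, hv, hx0, hy0]
  have hstep (u v : Fin m) (huv : (u : ℕ) + 1 = v) : γ u ≠ γ v := by
    rcases le_or_gt (w : ℕ) u with hu | hu
    · rw [hγ_right hu, hγ_right (by omega), show (v : ℕ) - w = u - w + 1 by omega]
      exact (hxne _).symm
    · rw [hγ_left hu.le, hγ_left (by omega), show (w : ℕ) - u = w - v + 1 by omega]
      exact hyne _
  refine ⟨γ, fun v => ?_, fun u v huv => ?_, by simp [hγ_right le_rfl, hx0]⟩
  · rw [← padList_val L v]
    rcases le_total (w : ℕ) v with hv | hv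
    · simpa [hγ_right hv, Nat.add_sub_cancel' hv] using hxL (v - w)
    · simpa [hγ_left hv, Nat.sub_sub_self hv] using hyL (w - v)
  · rcases pathGraph_adj.mp huv with h | h
    exacts [hstep u v h, (hstep v u h).symm]

theorem stmt7 (m : ℕ) (L L' : Fin m → Finset ℕ) (hne : L ≠ L')
    (hsub : ∀ v, L v ⊆ L' v) (hcard : ∀ v, 2 ≤ (L' v).card) :
    colCount (pathGraph m) L < colCount (pathGraph m) L' := by
  obtain ⟨w, hw⟩ := Function.ne_iff.mp hne
  obtain ⟨c, hcL', hcL⟩ := Finset.exists_of_ssubset ((hsub w).ssubset_of_ne hw)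
  obtain ⟨γ, hγL', hγproper, hγw⟩ := exists_pathGraph_coloring_eq L' hcard w hcL'
  exact colCount_lt_colCount _ hsub hγL' hγproper (w := w) (hγw ▸ hcL)
end

section
/- Every cycle of length k ≥ 3 is 2-monophilic: for every assignment of 2-element color lists to its vertices, the number of proper colorings from the lists is at least col(C,2), which is 2 if k is even and 0 if k is odd. -/
open SimpleGraph

/-!
A proper coloring of a cycle from the common list `{1, 2}` alternates, so there are two of them
on an even cycle and none on an odd one; it remains to find two colorings of an even cycle from
any `2`-list assignment. If all lists are equal, alternate their two colors. Otherwise cut the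
cycle between neighbours with different lists and color the resulting path greedily, starting at
either end with a color that the other end cannot take.
-/

open Finset

def IsListColoring {V : Type*} (G : SimpleGraph V) (L : V → Finset ℕ) (γ : V → ℕ) : Prop :=
  (∀ v, γ v ∈ L v) ∧ ∀ v w, G.Adj v w → γ v ≠ γ w

section ListColoring

variable {V : Type*} [Fintype V] {G : SimpleGraph V} {L : V → Finset ℕ}

open Classical in
lemma isListColoring_iff_mem_filter {γ : V → ℕ} : IsListColoring G L γ ↔
    γ ∈ (Fintype.piFinset L).filter fun γ => ∀ v w, G.Adj v w → γ v ≠ γ w := by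
  simp [IsListColoring, Fintype.mem_piFinset]

lemma two_le_colCount {γ₁ γ₂ : V → ℕ} (h₁ : IsListColoring G L γ₁) (h₂ : IsListColoring G L γ₂)
    (hne : γ₁ ≠ γ₂) : 2 ≤ colCount G L :=
  one_lt_card.2
    ⟨γ₁, isListColoring_iff_mem_filter.1 h₁, γ₂, isListColoring_iff_mem_filter.1 h₂, hne⟩

end ListColoring

lemma Finset.eq_of_mem_of_card_eq_two {α : Type*} [DecidableEq α] {s : Finset α} (hs : #s = 2)
    {a b c : α} (ha : a ∈ s) (hb : b ∈ s) (hc : c ∈ s) (hab : a ≠ b) (hbc : b ≠ c) : a = c := by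
  by_contra hac
  have : #{a, b, c} ≤ #s := card_le_card (by simp [insert_subset_iff, ha, hb, hc])
  rw [card_insert_of_notMem (by simp [hab, hac]), card_pair hbc] at this
  omega

section PathColoring

variable {A B : ℕ → Finset ℕ} {n m : ℕ} {φ ψ : ℕ → ℕ}

def IsPathColoring (A : ℕ → Finset ℕ) (n : ℕ) (φ : ℕ → ℕ) : Prop :=
  (∀ j ≤ n, φ j ∈ A j) ∧ ∀ j < n, φ j ≠ φ (j + 1)

def IsCycleColoring (A : ℕ → Finset ℕ) (n : ℕ) (φ : ℕ → ℕ) : Prop :=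
  IsPathColoring A n φ ∧ φ n ≠ φ 0

lemma isPathColoring_const_zero {a : ℕ} (ha : a ∈ A 0) : IsPathColoring A 0 fun _ => a :=
  ⟨fun j hj => by rwa [Nat.le_zero.1 hj], fun j hj => absurd hj j.not_lt_zero⟩

lemma IsPathColoring.exists_extension (hA : ∀ j ≤ n, 1 < #(A j)) (hφ : IsPathColoring A m φ)
    (hmn : m ≤ n) : ∃ ψ, IsPathColoring A n ψ ∧ ∀ j ≤ m, ψ j = φ j := by
  induction n, hmn using Nat.le_induction with
  | base => exact ⟨φ, hφ, fun _ _ => rfl⟩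
  | succ n hmn ih =>
    obtain ⟨ψ, ⟨hmem, hne⟩, hagree⟩ := ih fun j hj => hA j (by omega)
    obtain ⟨x, hx, hxψ⟩ := exists_mem_ne (hA (n + 1) le_rfl) (ψ n)
    refine ⟨Function.update ψ (n + 1) x, ⟨fun j hj => ?_, fun j hj => ?_⟩, fun j hj => ?_⟩
    · rcases (Nat.le_succ_iff.1 hj) with hj | rfl
      · rw [Function.update_of_ne (by omega)]; exact hmem j hj
      · rwa [Function.update_self]
    · rcases (Nat.lt_succ_iff_lt_or_eq.1 hj) with hj | rfl
      · rw [Function.update_of_ne (by omega), Function.update_of_ne (by omega)]; exact hne j hj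
      · rw [Function.update_of_ne (by omega), Function.update_self]; exact hxψ.symm
    · rw [Function.update_of_ne (by omega)]; exact hagree j hj

lemma IsPathColoring.reverse (hφ : IsPathColoring A n φ) (hB : ∀ j ≤ n, B j = A (n - j))
    (hψ : ∀ j ≤ n, ψ j = φ (n - j)) : IsPathColoring B n ψ := by
  refine ⟨fun j hj => ?_, fun j hj => ?_⟩
  · rw [hB j hj, hψ j hj]; exact hφ.1 _ (by omega)
  · rw [hψ j hj.le, hψ (j + 1) hj, show n - j = n - (j + 1) + 1 by omega]
    exact (hφ.2 _ (by omega)).symm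

lemma IsCycleColoring.reverse (hφ : IsCycleColoring A n φ) (hB : ∀ j ≤ n, B j = A (n - j))
    (hψ : ∀ j ≤ n, ψ j = φ (n - j)) : IsCycleColoring B n ψ := by
  refine ⟨hφ.1.reverse hB hψ, ?_⟩
  rw [hψ n le_rfl, hψ 0 (Nat.zero_le n), Nat.sub_self, Nat.sub_zero]
  exact hφ.2.symm

/-- If `φ j ∉ A (j + 1)`, recoloring vertex `j + 1` and extending greedily gives a second
coloring of the cycle, closed up because its color at `0` is missing from `A n`. -/
lemma IsPathColoring.mem_succ_of_unique (hA : ∀ j ≤ n, 1 < #(A j)) (hφ : IsPathColoring A n φ)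
    (h0 : φ 0 ∉ A n) (huniq : ∀ ψ, IsCycleColoring A n ψ → ∀ j ≤ n, ψ j = φ j) :
    ∀ j < n, φ j ∈ A (j + 1) := by
  intro j hj
  by_contra hφj
  obtain ⟨e, he, heφ⟩ := exists_mem_ne (hA (j + 1) hj) (φ (j + 1))
  have hpre : IsPathColoring A (j + 1) (Function.update φ (j + 1) e) := by
    refine ⟨fun i hi => ?_, fun i hi => ?_⟩
    · rcases (Nat.le_succ_iff.1 hi) with hi | rfl
      · rw [Function.update_of_ne (by omega)]; exact hφ.1 i (by omega)
      · rwa [Function.update_self]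
    · rcases (Nat.lt_succ_iff_lt_or_eq.1 hi) with hi | rfl
      · rw [Function.update_of_ne (by omega), Function.update_of_ne (by omega)]
        exact hφ.2 i (by omega)
      · rw [Function.update_of_ne (by omega), Function.update_self]
        exact fun h => hφj (h ▸ he)
  obtain ⟨ψ, hψ, hagree⟩ := hpre.exists_extension hA hj
  have hψ0 : ψ 0 = φ 0 := by rw [hagree 0 (Nat.zero_le _), Function.update_of_ne (by omega)]
  have hψe : ψ (j + 1) = e := by rw [hagree _ le_rfl, Function.update_self]
  have hcycle : IsCycleColoring A n ψ := ⟨hψ, fun h => h0 (hψ0 ▸ h ▸ hψ.1 n le_rfl)⟩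
  exact heφ (hψe ▸ huniq ψ hcycle (j + 1) hj)

lemma IsPathColoring.mem_pred_of_unique (hA : ∀ j ≤ n, 1 < #(A j)) (hφ : IsPathColoring A n φ)
    (hn : φ n ∉ A 0) (huniq : ∀ ψ, IsCycleColoring A n ψ → ∀ j ≤ n, ψ j = φ j) :
    ∀ j, 1 ≤ j → j ≤ n → φ j ∈ A (j - 1) := by
  intro j h1 hj
  have hrev : IsPathColoring (fun j => A (n - j)) n fun j => φ (n - j) :=
    hφ.reverse (fun _ _ => rfl) fun _ _ => rfl
  have := hrev.mem_succ_of_unique (fun j _ => hA _ (Nat.sub_le n j)) (by simpa using hn)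
    (fun χ hχ i hi => by
      have hχ' : IsCycleColoring A n fun i => χ (n - i) :=
        hχ.reverse (fun i hi => by rw [Nat.sub_sub_self hi]) fun _ _ => rfl
      simpa [Nat.sub_sub_self hi] using huniq _ hχ' (n - i) (Nat.sub_le n i))
    (n - j) (by omega)
  rwa [Nat.sub_sub_self hj, show n - (n - j + 1) = j - 1 by omega] at this

lemma IsPathColoring.apply_eq_apply_one_of_forced (hA : ∀ j ≤ n, #(A j) = 2)
    (hφ : IsPathColoring A n φ) (hfwd : ∀ j < n, φ j ∈ A (j + 1))
    (hbwd : ∀ j, 1 ≤ j → j ≤ n → φ j ∈ A (j - 1)) (hn : Odd n) : φ n = φ 1 := by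
  have hper : ∀ j, j + 2 ≤ n → φ (j + 2) = φ j := fun j hj =>
    (eq_of_mem_of_card_eq_two (hA (j + 1) (by omega)) (hfwd j (by omega))
      (hφ.1 (j + 1) (by omega)) (hbwd (j + 2) (by omega) hj) (hφ.2 j (by omega))
      (hφ.2 (j + 1) (by omega))).symm
  have hodd : ∀ i, 2 * i + 1 ≤ n → φ (2 * i + 1) = φ 1 := by
    intro i hi
    induction i with
    | zero => rfl
    | succ i ih =>
      rw [show 2 * (i + 1) + 1 = 2 * i + 1 + 2 by ring, hper _ (by omega), ih (by omega)]
  obtain ⟨i, rfl⟩ := hn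
  exact hodd i le_rfl

/-- Color greedily forwards from a color of `A 0` missing from `A n`, and backwards from a color
of `A n` missing from `A 0`. If these were the same and the only coloring, it would be forced by
both neighbours at every inner vertex, hence `2`-periodic, so on an odd path its last color would
equal its color at `1`, which lies in `A 0`. -/
theorem exists_isCycleColoring_ne_of_ne (hA : ∀ j ≤ n, #(A j) = 2) (hn : Odd n)
    (hA0 : A n ≠ A 0) :
    ∃ φ ψ, IsCycleColoring A n φ ∧ IsCycleColoring A n ψ ∧ ∃ j ≤ n, φ j ≠ ψ j := by
  have hA' : ∀ j ≤ n, 1 < #(A j) := fun j hj => by rw [hA j hj]; norm_num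
  obtain ⟨c, hc0, hcn⟩ : ∃ c ∈ A 0, c ∉ A n := by
    by_contra! h
    exact hA0 (eq_of_subset_of_card_le h (by rw [hA 0 (Nat.zero_le n), hA n le_rfl])).symm
  obtain ⟨d, hdn, hd0⟩ : ∃ d ∈ A n, d ∉ A 0 := by
    by_contra! h
    exact hA0 (eq_of_subset_of_card_le h (by rw [hA 0 (Nat.zero_le n), hA n le_rfl]))
  by_contra! H
  obtain ⟨φ, hφ, hφ0⟩ := (isPathColoring_const_zero hc0).exists_extension hA' (Nat.zero_le n)
  replace hφ0 : φ 0 = c := hφ0 0 le_rfl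
  have hφc : IsCycleColoring A n φ := ⟨hφ, fun h => hcn (hφ0 ▸ h ▸ hφ.1 n le_rfl)⟩
  obtain ⟨ψ, hψ, hψ0⟩ := (isPathColoring_const_zero (A := fun j => A (n - j))
    (by simpa using hdn)).exists_extension (fun j _ => hA' _ (Nat.sub_le n j)) (Nat.zero_le n)
  have hψc : IsCycleColoring A n fun j => ψ (n - j) := by
    refine ⟨hψ.reverse (fun j hj => by rw [Nat.sub_sub_self hj]) fun _ _ => rfl, ?_⟩
    intro h
    simp only [Nat.sub_self, Nat.sub_zero, hψ0 0 le_rfl] at h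
    exact hd0 (by simpa [h] using hψ.1 n le_rfl)
  have hφn : φ n = d := by simpa [hψ0 0 le_rfl] using H φ _ hφc hψc n le_rfl
  have huniq : ∀ χ, IsCycleColoring A n χ → ∀ j ≤ n, χ j = φ j := fun χ hχ => H χ φ hχ hφc
  have hfwd := hφ.mem_succ_of_unique hA' (hφ0 ▸ hcn) huniq
  have hbwd := hφ.mem_pred_of_unique hA' (hφn ▸ hd0) huniq
  apply hd0
  rw [← hφn, hφ.apply_eq_apply_one_of_forced hA hfwd hbwd hn]
  exact hbwd 1 le_rfl hn.pos

theorem exists_isCycleColoring_ne_of_forall_eq (hA : #(A 0) = 2) (hn : Odd n)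
    (hconst : ∀ j ≤ n, A j = A 0) :
    ∃ φ ψ, IsCycleColoring A n φ ∧ IsCycleColoring A n ψ ∧ ∃ j ≤ n, φ j ≠ ψ j := by
  obtain ⟨a, b, hab, hA0⟩ := card_eq_two.1 hA
  have halt : ∀ x y, x ≠ y → x ∈ A 0 → y ∈ A 0 →
      IsCycleColoring A n fun j => if Even j then x else y := by
    intro x y hxy hx hy
    refine ⟨⟨fun j hj => ?_, fun j _ => ?_⟩, ?_⟩
    · rw [hconst j hj]; dsimp only; split_ifs <;> assumption
    · rcases Nat.even_or_odd j with hj | hj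
      · simp [hj, hxy]
      · simp [hj, hxy.symm]
    · simp [Nat.not_even_iff_odd.2 hn, hxy.symm]
  exact ⟨_, _, halt a b hab (by simp [hA0]) (by simp [hA0]),
    halt b a hab.symm (by simp [hA0]) (by simp [hA0]), 0, Nat.zero_le n, by simp [hab]⟩

end PathColoring

section Cycle

open Fin.NatCast

variable {n : ℕ}

lemma Fin.val_eq_add_one_or_of_val_sub_eq_one {a b : Fin (n + 1)} (h : (b - a).val = 1) :
    b.val = a.val + 1 ∨ (a.val = n ∧ b.val = 0) := by
  have := b.isLt
  rcases le_or_gt a b with hab | hab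
  · rw [Fin.coe_sub_iff_le.2 hab] at h; rw [Fin.le_def] at hab; omega
  · rw [Fin.coe_sub_iff_lt.2 hab] at h; rw [Fin.lt_def] at hab; omega

lemma IsCycleColoring.isListColoring_cycleGraph {L : Fin (n + 1) → Finset ℕ} {φ : ℕ → ℕ}
    (t : Fin (n + 1)) (hφ : IsCycleColoring (fun j => L (t + j)) n φ) :
    IsListColoring (cycleGraph (n + 1)) L fun i => φ (i - t).val := by
  have hadj : ∀ a b : Fin (n + 1), (b - a).val = 1 → φ a.val ≠ φ b.val := by
    intro a b h
    have := b.isLt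
    rcases Fin.val_eq_add_one_or_of_val_sub_eq_one h with h | ⟨ha, hb⟩
    · rw [h]; exact hφ.1.2 _ (by omega)
    · rw [ha, hb]; exact hφ.2
  refine ⟨fun i => ?_, fun u w huw => ?_⟩
  · simpa using hφ.1.1 (i - t).val (Nat.lt_succ_iff.1 (i - t).isLt)
  · rcases cycleGraph_adj'.1 huw with h | h
    · exact (hadj _ _ (by rwa [sub_sub_sub_cancel_right])).symm
    · exact hadj _ _ (by rwa [sub_sub_sub_cancel_right])

theorem two_le_colCount_cycleGraph (hn : Odd n) (L : Fin (n + 1) → Finset ℕ)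
    (hL : ∀ v, #(L v) = 2) : 2 ≤ colCount (cycleGraph (n + 1)) L := by
  suffices ∃ t : Fin (n + 1), ∃ φ ψ, IsCycleColoring (fun j => L (t + j)) n φ ∧
      IsCycleColoring (fun j => L (t + j)) n ψ ∧ ∃ j ≤ n, φ j ≠ ψ j by
    obtain ⟨t, φ, ψ, hφ, hψ, j, hj, hne⟩ := this
    refine two_le_colCount (hφ.isListColoring_cycleGraph t) (hψ.isListColoring_cycleGraph t)
      fun h => hne ?_
    simpa [Fin.val_natCast, Nat.mod_eq_of_lt (Nat.lt_succ_of_le hj)] using congrFun h (t + j)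
  by_cases h : ∃ s, L (s + 1) ≠ L s
  · obtain ⟨s, hs⟩ := h
    have hwrap : s + 1 + Fin.last n = s := by
      rw [add_assoc, add_comm 1, Fin.last_add_one, add_zero]
    exact ⟨s + 1,
      exists_isCycleColoring_ne_of_ne (fun _ _ => hL _) hn (by simpa [hwrap] using hs.symm)⟩
  · push Not at h
    have hconst : ∀ j : ℕ, L j = L 0 := by
      intro j
      induction j with
      | zero => simp
      | succ j ih => rw [Nat.cast_succ, h, ih]
    exact ⟨0, exists_isCycleColoring_ne_of_forall_eq (by simpa using hL 0) hn
      fun j _ => by simpa using hconst j⟩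

lemma IsListColoring.eq_ite_even {γ : Fin (n + 2) → ℕ}
    (hγ : IsListColoring (cycleGraph (n + 2)) (fun _ => {1, 2}) γ) (j : ℕ) :
    γ j = if Even j then γ 0 else 3 - γ 0 := by
  have hmem : ∀ i, γ i = 1 ∨ γ i = 2 := by simpa using hγ.1
  have hstep : ∀ i, γ (i + 1) = 3 - γ i := fun i => by
    have := hγ.2 i (i + 1) (cycleGraph_adj.2 (Or.inr (add_sub_cancel_left i 1)))
    rcases hmem i with h | h <;> rcases hmem (i + 1) with h' | h' <;> omega
  induction j with
  | zero => simp
  | succ j ih =>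
    rw [Nat.cast_succ, hstep, ih]
    rcases hmem 0 with h | h <;> by_cases hj : Even j <;> simp [hj, Nat.even_add_one, h]

theorem colCount_cycleGraph_pair (n : ℕ) :
    colCount (cycleGraph (n + 2)) (fun _ => {1, 2}) = if Even (n + 2) then 2 else 0 := by
  have hcol : ∀ {γ}, γ ∈ _ → IsListColoring (cycleGraph (n + 2)) (fun _ => {1, 2}) γ :=
    fun hγ => isListColoring_iff_mem_filter.2 hγ
  split_ifs with hn
  · refine le_antisymm ?_ (two_le_colCount_cycleGraph
      (by simpa [Nat.odd_add_one, Nat.even_add_one] using hn) _ fun _ => rfl)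
    refine card_le_card_of_injOn (t := {1, 2}) (fun γ => γ 0) (fun γ hγ => (hcol hγ).1 0)
      fun γ₁ h₁ γ₂ h₂ h => funext fun i => ?_
    rw [← Fin.cast_val_eq_self i, (hcol h₁).eq_ite_even, (hcol h₂).eq_ite_even]
    simp only at h
    rw [h]
  · refine card_eq_zero.2 (eq_empty_of_forall_notMem fun γ hγ => ?_)
    have hwrap := (hcol hγ).eq_ite_even (n + 2)
    rw [Fin.natCast_self, if_neg hn] at hwrap
    have := (hcol hγ).1 0
    simp only [mem_insert, mem_singleton] at this
    omega

end Cycle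

theorem stmt9 (k : ℕ) (hk : 3 ≤ k) :
    Monophilic (cycleGraph k) 2 ∧
      colCount (cycleGraph k) (fun _ => ({1, 2} : Finset ℕ)) =
        (if Even k then 2 else 0) := by
  obtain ⟨n, rfl⟩ : ∃ n, k = n + 2 := ⟨k - 2, by omega⟩
  refine ⟨fun L hL => ?_, colCount_cycleGraph_pair n⟩
  rw [show Finset.Icc 1 2 = {1, 2} by decide, colCount_cycleGraph_pair]
  split_ifs with hn
  · exact two_le_colCount_cycleGraph (by simpa [Nat.odd_add_one, Nat.even_add_one] using hn) L hL
  · exact Nat.zero_le _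
end

section
/- A connected graph G is n-monophilic if and only if its core is n-monophilic, where the core is obtained by repeatedly deleting vertices of degree 1. -/
open SimpleGraph

open Classical in
/-- One step of core formation: delete a vertex whose degree in the induced
subgraph on `s` equals 1. -/
noncomputable def DelStep {V : Type*} [Fintype V] (G : SimpleGraph V) (s t : Finset V) : Prop :=
  ∃ v ∈ s, (s.filter fun w => G.Adj v w).card = 1 ∧ t = s.erase v

open Classical in
/-- `s` is (the vertex set of) the core of `G`: it is obtained from the full vertex set by
repeatedly deleting vertices of degree 1, and no vertex of `s` has degree 1 in the
induced subgraph on `s`. -/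
noncomputable def IsCore {V : Type*} [Fintype V] (G : SimpleGraph V) (s : Finset V) : Prop :=
  Relation.ReflTransGen (DelStep G) Finset.univ s ∧
    ∀ v ∈ s, (s.filter fun w => G.Adj v w).card ≠ 1

/-! If `v` is a leaf of `G[s]` with neighbour `u`, every `L`-colouring `δ` of `G[s - v]` extends
to `G[s]` in exactly `|L v \ {δ u}|` ways. For `n`-lists this is at least `n - 1`, with equality
when `L u ⊆ L v`, in particular for the constant lists `{1,…,n}`. Hence, for `n ≥ 2`, deleting
a leaf preserves `n`-monophilicity in both directions (for the harder one, first replace `L v`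
by `L u`, which makes the count exactly `n - 1` times the count on `s - v`); for `n ≤ 1` every
graph is `n`-monophilic. The core is reached by such deletions. -/

namespace SimpleGraph

open Finset Classical

section LeafNeighbour

variable {V : Type*} {G : SimpleGraph V} {s : Finset V} {v u : V}

theorem mem_and_adj_of_leaf (hleaf : s.filter (fun w => G.Adj v w) = {u}) :
    u ∈ s ∧ G.Adj v u :=
  mem_filter.mp (hleaf ▸ mem_singleton_self u)

theorem mem_erase_of_leaf (hleaf : s.filter (fun w => G.Adj v w) = {u}) : u ∈ s.erase v :=
  have ⟨hu, hadj⟩ := mem_and_adj_of_leaf hleaf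
  mem_erase.mpr ⟨hadj.ne.symm, hu⟩

theorem eq_of_adj_leaf (hleaf : s.filter (fun w => G.Adj v w) = {u}) {w : V} (hw : w ∈ s)
    (hadj : G.Adj v w) : w = u :=
  mem_singleton.mp (hleaf ▸ mem_filter.mpr ⟨hw, hadj⟩)

end LeafNeighbour

variable {V : Type*} [Fintype V] (G : SimpleGraph V)

/-- Proper `L`-colourings of `G[s]`, with the vertices outside `s` pinned to colour `0` so that
they all live in `V → ℕ`. -/
noncomputable def colorsOn (s : Finset V) (L : V → Finset ℕ) : Finset (V → ℕ) :=
  (Fintype.piFinset fun v => if v ∈ s then L v else {0}).filter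
    fun γ => ∀ v ∈ s, ∀ w ∈ s, G.Adj v w → γ v ≠ γ w

noncomputable def colCountOn (s : Finset V) (L : V → Finset ℕ) : ℕ :=
  (G.colorsOn s L).card

def MonophilicOn (s : Finset V) (n : ℕ) : Prop :=
  ∀ L : V → Finset ℕ, (∀ v ∈ s, (L v).card = n) →
    G.colCountOn s (fun _ => Icc 1 n) ≤ G.colCountOn s L

variable {G} {s : Finset V} {L : V → Finset ℕ}

theorem mem_colorsOn {γ : V → ℕ} :
    γ ∈ G.colorsOn s L ↔ (∀ v ∈ s, γ v ∈ L v) ∧ (∀ v ∉ s, γ v = 0) ∧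
      ∀ v ∈ s, ∀ w ∈ s, G.Adj v w → γ v ≠ γ w := by
  simp only [colorsOn, mem_filter, Fintype.mem_piFinset]
  constructor
  · rintro ⟨hmem, hproper⟩
    exact ⟨fun v hv => by simpa [hv] using hmem v, fun v hv => by simpa [hv] using hmem v,
      hproper⟩
  · rintro ⟨hin, hout, hproper⟩
    refine ⟨fun v => ?_, hproper⟩
    split_ifs with hv
    exacts [hin v hv, by simp [hout v hv]]

theorem colCountOn_congr {L' : V → Finset ℕ} (h : ∀ v ∈ s, L v = L' v) :
    G.colCountOn s L = G.colCountOn s L' := by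
  unfold colCountOn
  congr 1
  ext γ
  simp only [mem_colorsOn]
  exact and_congr_left' (forall₂_congr fun v hv => by rw [h v hv])

theorem colCountOn_univ (L : V → Finset ℕ) : G.colCountOn univ L = colCount G L := by
  unfold colCountOn colCount
  congr 1
  ext γ
  simp [mem_colorsOn]

theorem colCount_induce (L : V → Finset ℕ) :
    colCount (G.induce (s : Set V)) (fun v => L v) = G.colCountOn s L := by
  unfold colCount colCountOn
  refine card_nbij' (fun γ w => if hw : w ∈ s then γ ⟨w, hw⟩ else 0) (fun δ v => δ v)
    ?_ ?_ ?_ ?_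
  · intro γ hγ
    simp only [coe_filter, Set.mem_ofPred_eq, Fintype.mem_piFinset] at hγ
    simp only [mem_coe, mem_colorsOn]
    refine ⟨fun v hv => by simpa [hv] using hγ.1 ⟨v, hv⟩, fun v hv => by simp [hv],
      fun v hv w hw hadj => by simpa [hv, hw] using hγ.2 ⟨v, hv⟩ ⟨w, hw⟩ hadj⟩
  · intro δ hδ
    obtain ⟨hin, -, hproper⟩ := mem_colorsOn.mp hδ
    simp only [coe_filter, Set.mem_ofPred_eq, Fintype.mem_piFinset]
    exact ⟨fun v => hin v v.2, fun v w hadj => hproper v v.2 w w.2 hadj⟩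
  · intro γ _
    funext v
    simp
  · intro δ hδ
    funext w
    by_cases hw : w ∈ s
    · simp [hw]
    · simp [hw, (mem_colorsOn.mp hδ).2.1 w hw]

theorem monophilic_iff_monophilicOn_univ (n : ℕ) : Monophilic G n ↔ G.MonophilicOn univ n := by
  simp only [Monophilic, MonophilicOn, colCountOn_univ, mem_univ, forall_const]

theorem monophilic_induce_iff (n : ℕ) :
    Monophilic (G.induce (s : Set V)) n ↔ G.MonophilicOn s n := by
  refine ⟨fun h L hL => ?_, fun h L hL => ?_⟩
  · exact (colCount_induce _).symm.le.trans
      ((h (fun v => L v) fun v => hL v v.2).trans (colCount_induce L).le)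
  · let L' : V → Finset ℕ := fun w => if hw : w ∈ s then L ⟨w, hw⟩ else Icc 1 n
    have hL' : (fun v : (s : Set V) => L' v) = L := by
      funext v
      simp [L']
    have := h L' fun v hv => by simp [L', hv, hL ⟨v, hv⟩]
    rwa [← colCount_induce, ← colCount_induce, hL'] at this

theorem monophilicOn_zero : G.MonophilicOn s 0 :=
  fun _ hL => (colCountOn_congr fun v hv => by simp [card_eq_zero.mp (hL v hv)]).le

theorem colCountOn_eq_one_of_card_eq_one (hs : ∀ v ∈ s, ∀ w ∈ s, ¬G.Adj v w)
    (hL : ∀ v ∈ s, (L v).card = 1) : G.colCountOn s L = 1 := by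
  rw [colCountOn, colorsOn,
    filter_true_of_mem fun γ _ v hv w hw hadj => absurd hadj (hs v hv w hw),
    Fintype.card_piFinset]
  refine prod_eq_one fun v _ => ?_
  split_ifs with hv
  exacts [hL v hv, card_singleton 0]

theorem monophilicOn_one : G.MonophilicOn s 1 := by
  intro L hL
  obtain h0 | ⟨γ, hγ⟩ := (G.colorsOn s fun _ => Icc 1 1).eq_empty_or_nonempty
  · rw [colCountOn, h0, card_empty]
    exact Nat.zero_le _
  obtain ⟨hin, -, hproper⟩ := mem_colorsOn.mp hγ
  have hone : ∀ v ∈ s, γ v = 1 := fun v hv => by simpa using hin v hv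
  have hs : ∀ v ∈ s, ∀ w ∈ s, ¬G.Adj v w := fun v hv w hw hadj =>
    hproper v hv w hw hadj (by rw [hone v hv, hone w hw])
  rw [colCountOn_eq_one_of_card_eq_one hs hL, colCountOn_eq_one_of_card_eq_one hs (by simp)]

theorem monophilicOn_of_le_one {n : ℕ} (hn : n ≤ 1) :
    G.MonophilicOn s n := by
  interval_cases n
  exacts [monophilicOn_zero, monophilicOn_one]

theorem update_mem_colorsOn_erase {γ : V → ℕ} (hγ : γ ∈ G.colorsOn s L) (v : V) :
    Function.update γ v 0 ∈ G.colorsOn (s.erase v) L := by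
  obtain ⟨hin, hout, hproper⟩ := mem_colorsOn.mp hγ
  refine mem_colorsOn.mpr ⟨fun w hw => ?_, fun w hw => ?_, fun a ha b hb hadj => ?_⟩
  · rw [Function.update_of_ne (ne_of_mem_erase hw)]
    exact hin w (mem_of_mem_erase hw)
  · by_cases hwv : w = v
    · simp [hwv]
    · rw [Function.update_of_ne hwv]
      exact hout w fun hws => hw (mem_erase.mpr ⟨hwv, hws⟩)
  · rw [Function.update_of_ne (ne_of_mem_erase ha), Function.update_of_ne (ne_of_mem_erase hb)]
    exact hproper a (mem_of_mem_erase ha) b (mem_of_mem_erase hb) hadj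

section Leaf

variable {v u : V}

theorem update_mem_colorsOn_of_leaf (hv : v ∈ s) (hleaf : s.filter (fun w => G.Adj v w) = {u})
    {δ : V → ℕ} (hδ : δ ∈ G.colorsOn (s.erase v) L) {c : ℕ}
    (hc : c ∈ (L v).erase (δ u)) :
    Function.update δ v c ∈ G.colorsOn s L := by
  obtain ⟨hin, hout, hproper⟩ := mem_colorsOn.mp hδ
  obtain ⟨hcu, hcv⟩ := mem_erase.mp hc
  have huv : u ≠ v := ne_of_mem_erase (mem_erase_of_leaf hleaf)
  have hleaf_color : ∀ w ∈ s, G.Adj v w → Function.update δ v c w ≠ c := by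
    intro w hw hadj
    rw [eq_of_adj_leaf hleaf hw hadj, Function.update_of_ne huv]
    exact Ne.symm hcu
  refine mem_colorsOn.mpr ⟨fun w hw => ?_, fun w hw => ?_, fun a ha b hb hadj => ?_⟩
  · by_cases hwv : w = v
    · subst hwv
      simpa using hcv
    · rw [Function.update_of_ne hwv]
      exact hin w (mem_erase.mpr ⟨hwv, hw⟩)
  · rw [Function.update_of_ne (ne_of_mem_of_not_mem hv hw).symm]
    exact hout w fun hws => hw (mem_of_mem_erase hws)
  · by_cases hav : a = v
    · subst hav
      simpa using (hleaf_color b hb hadj).symm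
    by_cases hbv : b = v
    · subst hbv
      simpa using hleaf_color a ha hadj.symm
    rw [Function.update_of_ne hav, Function.update_of_ne hbv]
    exact hproper a (mem_erase.mpr ⟨hav, ha⟩) b (mem_erase.mpr ⟨hbv, hb⟩) hadj

theorem card_fiber_of_leaf (hv : v ∈ s) (hleaf : s.filter (fun w => G.Adj v w) = {u})
    {δ : V → ℕ} (hδ : δ ∈ G.colorsOn (s.erase v) L) :
    #{γ ∈ G.colorsOn s L | Function.update γ v 0 = δ} = #((L v).erase (δ u)) := by
  have hδv : δ v = 0 := (mem_colorsOn.mp hδ).2.1 v (notMem_erase v s)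
  have huv : u ≠ v := ne_of_mem_erase (mem_erase_of_leaf hleaf)
  refine card_nbij' (fun γ => γ v) (fun c => Function.update δ v c) ?_ ?_ ?_ ?_
  · intro γ hγ
    obtain ⟨hγs, rfl⟩ := mem_filter.mp (mem_coe.mp hγ)
    obtain ⟨hin, -, hproper⟩ := mem_colorsOn.mp hγs
    have ⟨hu, hadj⟩ := mem_and_adj_of_leaf hleaf
    rw [mem_coe, Function.update_of_ne huv]
    exact mem_erase.mpr ⟨hproper v hv u hu hadj, hin v hv⟩
  · intro c hc
    refine mem_coe.mpr (mem_filter.mpr ⟨update_mem_colorsOn_of_leaf hv hleaf hδ hc, ?_⟩)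
    rw [Function.update_idem, ← hδv, Function.update_eq_self]
  · intro γ hγ
    obtain ⟨-, rfl⟩ := mem_filter.mp (mem_coe.mp hγ)
    simp
  · intro c _
    simp

theorem colCountOn_eq_sum_of_leaf (hv : v ∈ s) (hleaf : s.filter (fun w => G.Adj v w) = {u})
    (L : V → Finset ℕ) :
    G.colCountOn s L = ∑ δ ∈ G.colorsOn (s.erase v) L, #((L v).erase (δ u)) := by
  rw [colCountOn, card_eq_sum_card_fiberwise fun γ hγ => update_mem_colorsOn_erase hγ v]
  exact sum_congr rfl fun δ hδ => card_fiber_of_leaf hv hleaf hδ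

theorem mul_colCountOn_erase_le_of_leaf (hv : v ∈ s)
    (hleaf : s.filter (fun w => G.Adj v w) = {u}) {n : ℕ} (hL : #(L v) = n) :
    (n - 1) * G.colCountOn (s.erase v) L ≤ G.colCountOn s L := by
  rw [colCountOn_eq_sum_of_leaf hv hleaf, colCountOn, card_eq_sum_ones, mul_sum, mul_one]
  exact sum_le_sum fun δ _ => hL ▸ pred_card_le_card_erase

theorem colCountOn_eq_mul_of_leaf (hv : v ∈ s) (hleaf : s.filter (fun w => G.Adj v w) = {u})
    {n : ℕ} (hL : #(L v) = n) (hsub : L u ⊆ L v) :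
    G.colCountOn s L = (n - 1) * G.colCountOn (s.erase v) L := by
  rw [colCountOn_eq_sum_of_leaf hv hleaf, colCountOn, card_eq_sum_ones, mul_sum, mul_one]
  refine sum_congr rfl fun δ hδ => ?_
  rw [card_erase_of_mem (hsub ((mem_colorsOn.mp hδ).1 u (mem_erase_of_leaf hleaf))), hL]

end Leaf

theorem monophilicOn_iff_of_delStep {s t : Finset V} (h : DelStep G s t) (n : ℕ) :
    G.MonophilicOn s n ↔ G.MonophilicOn t n := by
  obtain ⟨v, hv, hdeg, rfl⟩ := h
  obtain ⟨u, hleaf⟩ := card_eq_one.mp hdeg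
  have hu := mem_erase_of_leaf hleaf
  rcases le_or_gt n 1 with hn | hn
  · exact iff_of_true (monophilicOn_of_le_one hn) (monophilicOn_of_le_one hn)
  have hconst : G.colCountOn s (fun _ => Icc 1 n) =
      (n - 1) * G.colCountOn (s.erase v) (fun _ => Icc 1 n) :=
    colCountOn_eq_mul_of_leaf hv hleaf (by simp) subset_rfl
  refine ⟨fun hs L hL => ?_, fun ht L hL => ?_⟩
  · let L' := Function.update L v (L u)
    have hL'v : #(L' v) = n := by simp [L', hL u hu]
    have key := hs L' fun w hw => by
      by_cases hwv : w = v
      · rwa [hwv]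
      · simpa [L', hwv] using hL w (mem_erase.mpr ⟨hwv, hw⟩)
    rw [hconst, colCountOn_eq_mul_of_leaf hv hleaf hL'v (by simp [L', ne_of_mem_erase hu]),
      colCountOn_congr (L := L') (L' := L) fun w hw =>
        Function.update_of_ne (ne_of_mem_erase hw) _ _] at key
    exact Nat.le_of_mul_le_mul_left key (by omega)
  · calc G.colCountOn s (fun _ => Icc 1 n)
        = (n - 1) * G.colCountOn (s.erase v) (fun _ => Icc 1 n) := hconst
      _ ≤ (n - 1) * G.colCountOn (s.erase v) L :=
        Nat.mul_le_mul_left _ (ht L fun w hw => hL w (mem_of_mem_erase hw))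
      _ ≤ G.colCountOn s L := mul_colCountOn_erase_le_of_leaf hv hleaf (hL v hv)

theorem monophilicOn_iff_of_reflTransGen {s t : Finset V}
    (h : Relation.ReflTransGen (DelStep G) s t) (n : ℕ) :
    G.MonophilicOn s n ↔ G.MonophilicOn t n := by
  induction h with
  | refl => rfl
  | tail _ hstep ih => exact ih.trans (monophilicOn_iff_of_delStep hstep n)

end SimpleGraph

theorem stmt11_general {V : Type*} [Fintype V] (G : SimpleGraph V)
    (n : ℕ) (s : Finset V) (hs : IsCore G s) :
    Monophilic G n ↔ Monophilic (G.induce (↑s : Set V)) n := by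
  rw [monophilic_iff_monophilicOn_univ, monophilic_induce_iff]
  exact monophilicOn_iff_of_reflTransGen hs.1 n

theorem stmt11 {V : Type*} [Fintype V] (G : SimpleGraph V) (hconn : G.Connected)
    (n : ℕ) (s : Finset V) (hs : IsCore G s) :
    Monophilic G n ↔ Monophilic (G.induce (↑s : Set V)) n :=
  stmt11_general G n s hs
end

section
/- For every m ≥ 2, the theta graph θ_{2,2,2m} is not 2-monophilic: there exists an assignment L of 2-element lists to its vertices with exactly one proper coloring from L, while col(θ_{2,2,2m},2) = 2. -/
/-!
Along a path, a list coloring is forced once its first color is fixed and each later list consists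
of the previous and the intended color. Give `u`, the middle vertex `a` of `p` and `r₀, …, r₂ₘ₋₃`
the list `{1,2}`, the middle vertex `b` of `q` and `r₂ₘ₋₂` the list `{2,3}`, and `r₂ₘ₋₁`, `v` the
list `{1,3}`. Color 2 at `u` forces 1 at `a`, hence 3 at `v`, leaving no color for `b`; so `u` gets
1, which propagates along `r` to 3 at `v` and then fixes `a` and `b`. For the constant list
`{1,2}` the color of `u` propagates alternately along each branch, and all branches have even
length, so there are exactly two colorings.
-/

open SimpleGraph

theorem colCount_eq_card {V : Type*} [Fintype V] {G : SimpleGraph V} {L : V → Finset ℕ}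
    {S : Finset (V → ℕ)}
    (hS : ∀ γ, γ ∈ S ↔ (∀ x, γ x ∈ L x) ∧ ∀ x y, G.Adj x y → γ x ≠ γ y) :
    colCount G L = S.card := by
  unfold colCount
  congr 1
  ext γ
  simp [hS]

/-- `f` is a proper coloring of the path `0 – 1 – ⋯ – n` from the lists `L i`; values of `f` and `L`
beyond `n` are irrelevant. -/
def IsPathListColoring (n : ℕ) (L : ℕ → Finset ℕ) (f : ℕ → ℕ) : Prop :=
  (∀ i ≤ n, f i ∈ L i) ∧ ∀ i < n, f i ≠ f (i + 1)

namespace IsPathListColoring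

variable {n : ℕ} {L : ℕ → Finset ℕ} {f g : ℕ → ℕ}

theorem congr (h : ∀ i ≤ n, f i = g i) :
    IsPathListColoring n L f ↔ IsPathListColoring n L g := by
  unfold IsPathListColoring
  constructor <;> rintro ⟨hmem, hne⟩ <;> refine ⟨fun i hi => ?_, fun i hi => ?_⟩
  · rw [← h i hi]; exact hmem i hi
  · rw [← h i hi.le, ← h (i + 1) hi]; exact hne i hi
  · rw [h i hi]; exact hmem i hi
  · rw [h i hi.le, h (i + 1) hi]; exact hne i hi

theorem eq_of_forced {c : ℕ → ℕ} (hf : IsPathListColoring n L f) (h0 : f 0 = c 0)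
    (hc : ∀ i < n, ∀ t ∈ L (i + 1), t = c i ∨ t = c (i + 1)) : ∀ i ≤ n, f i = c i := by
  intro i hi
  induction i with
  | zero => exact h0
  | succ i ih =>
    have hne := hf.2 i hi
    rw [ih (Nat.le_of_succ_le hi)] at hne
    exact (hc i hi _ (hf.1 _ hi)).resolve_left hne.symm

end IsPathListColoring

def altColoring (c c' i : ℕ) : ℕ :=
  if Even i then c else c'

theorem altColoring_of_even {c c' i : ℕ} (hi : Even i) : altColoring c c' i = c :=
  if_pos hi

theorem isPathListColoring_altColoring {c c' : ℕ} (hc : c ≠ c') (n : ℕ) :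
    IsPathListColoring n (fun _ => {c, c'}) (altColoring c c') := by
  refine ⟨fun i _ => ?_, fun i _ => ?_⟩
  · unfold altColoring; split_ifs <;> simp
  · unfold altColoring; split_ifs <;> simp_all [Nat.even_add_one, eq_comm]

theorem IsPathListColoring.eq_altColoring {n c c' : ℕ} {f : ℕ → ℕ}
    (hf : IsPathListColoring n (fun _ => {c, c'}) f) (h0 : f 0 = c) :
    ∀ i ≤ n, f i = altColoring c c' i := by
  refine hf.eq_of_forced h0 fun i _ t ht => ?_
  simp only [altColoring, Nat.even_add_one]
  simp only [Finset.mem_insert, Finset.mem_singleton] at ht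
  split_ifs <;> tauto

namespace SimpleGraph

variable {V : Type*} {G : SimpleGraph V} {u v : V}

theorem Walk.apply_ne_of_mk_mem_edges {α : Type*} {p : G.Walk u v} {γ : V → α}
    (hγ : ∀ i < p.length, γ (p.getVert i) ≠ γ (p.getVert (i + 1))) {x y : V}
    (h : s(x, y) ∈ p.edges) : γ x ≠ γ y := by
  obtain ⟨i, hi, hxy⟩ := p.mk_mem_edges_iff_exists.mp h
  rcases Sym2.eq_iff.mp hxy with ⟨rfl, rfl⟩ | ⟨rfl, rfl⟩
  exacts [hγ i hi, (hγ i hi).symm]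

theorem Walk.IsPath.exists_comp_getVert_eq {α : Type*} {p : G.Walk u v} (hp : p.IsPath)
    (f : ℕ → α) : ∃ g : V → α, ∀ i ≤ p.length, g (p.getVert i) = f i := by
  classical
  refine ⟨fun x => f (p.support.idxOf x), fun i hi => congrArg f ?_⟩
  have hmem := p.getVert_mem_support i
  refine hp.getVert_injOn ?_ hi (p.getVert_support_idxOf hmem)
  have := List.idxOf_lt_length_of_mem hmem
  simp only [Walk.length_support] at this
  exact Nat.lt_succ_iff.mp this

/-- `G` is the theta graph `θ_{|p|,|q|,|r|}` with branches `p`, `q`, `r`. -/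
structure IsTheta (p q r : G.Walk u v) : Prop where
  isPath_left : p.IsPath
  isPath_mid : q.IsPath
  isPath_right : r.IsPath
  inter_left_mid : ∀ x, x ∈ p.support → x ∈ q.support → x = u ∨ x = v
  inter_left_right : ∀ x, x ∈ p.support → x ∈ r.support → x = u ∨ x = v
  inter_mid_right : ∀ x, x ∈ q.support → x ∈ r.support → x = u ∨ x = v
  cover_support : ∀ x : V, x ∈ p.support ∨ x ∈ q.support ∨ x ∈ r.support
  cover_edgeSet : ∀ e, e ∈ G.edgeSet ↔ e ∈ p.edges ∨ e ∈ q.edges ∨ e ∈ r.edges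

namespace IsTheta

variable {p q r : G.Walk u v}

theorem forall_of_getVert (Θ : IsTheta p q r) {P : V → Prop}
    (hp : ∀ i ≤ p.length, P (p.getVert i)) (hq : ∀ i ≤ q.length, P (q.getVert i))
    (hr : ∀ i ≤ r.length, P (r.getVert i)) (x : V) : P x := by
  rcases Θ.cover_support x with h | h | h <;>
    obtain ⟨i, rfl, hi⟩ := Walk.mem_support_iff_exists_getVert.mp h
  exacts [hp i hi, hq i hi, hr i hi]

theorem ext {α : Type*} (Θ : IsTheta p q r) {γ γ' : V → α}
    (hp : ∀ i ≤ p.length, γ (p.getVert i) = γ' (p.getVert i))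
    (hq : ∀ i ≤ q.length, γ (q.getVert i) = γ' (q.getVert i))
    (hr : ∀ i ≤ r.length, γ (r.getVert i) = γ' (r.getVert i)) : γ = γ' :=
  funext (Θ.forall_of_getVert hp hq hr)

theorem exists_extension {α : Type*} (Θ : IsTheta p q r) (fp fq fr : ℕ → α)
    (hu₁ : fp 0 = fr 0) (hu₂ : fq 0 = fr 0)
    (hv₁ : fp p.length = fr r.length) (hv₂ : fq q.length = fr r.length) :
    ∃ F : V → α, (∀ i ≤ p.length, F (p.getVert i) = fp i) ∧
      (∀ i ≤ q.length, F (q.getVert i) = fq i) ∧ ∀ i ≤ r.length, F (r.getVert i) = fr i := by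
  classical
  obtain ⟨gp, hgp⟩ := Θ.isPath_left.exists_comp_getVert_eq fp
  obtain ⟨gq, hgq⟩ := Θ.isPath_mid.exists_comp_getVert_eq fq
  obtain ⟨gr, hgr⟩ := Θ.isPath_right.exists_comp_getVert_eq fr
  have hpu := hgp 0 p.length.zero_le
  have hqu := hgq 0 q.length.zero_le
  have hru := hgr 0 r.length.zero_le
  have hpv := hgp _ le_rfl
  have hqv := hgq _ le_rfl
  have hrv := hgr _ le_rfl
  simp only [Walk.getVert_zero, Walk.getVert_length] at hpu hqu hru hpv hqv hrv
  have hends : ∀ x, x = u ∨ x = v → gp x = gr x ∧ gq x = gr x := by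
    rintro x (rfl | rfl)
    · exact ⟨by rw [hpu, hru, hu₁], by rw [hqu, hru, hu₂]⟩
    · exact ⟨by rw [hpv, hrv, hv₁], by rw [hqv, hrv, hv₂]⟩
  refine ⟨fun x => if x ∈ p.support then gp x else if x ∈ q.support then gq x else gr x,
    fun i hi => ?_, fun i hi => ?_, fun i hi => ?_⟩
  · simp [hgp i hi]
  · have hx := q.getVert_mem_support i
    dsimp only
    split_ifs with h₁
    · obtain ⟨hpr, hqr⟩ := hends _ (Θ.inter_left_mid _ h₁ hx)
      rw [hpr, ← hqr, hgq i hi]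
    · exact hgq i hi
  · have hx := r.getVert_mem_support i
    dsimp only
    split_ifs with h₁ h₂
    · rw [(hends _ (Θ.inter_left_right _ h₁ hx)).1, hgr i hi]
    · rw [(hends _ (Θ.inter_mid_right _ h₂ hx)).2, hgr i hi]
    · exact hgr i hi

theorem listColoring_iff (Θ : IsTheta p q r) {L : V → Finset ℕ} {Lp Lq Lr : ℕ → Finset ℕ}
    (hLp : ∀ i ≤ p.length, L (p.getVert i) = Lp i) (hLq : ∀ i ≤ q.length, L (q.getVert i) = Lq i)
    (hLr : ∀ i ≤ r.length, L (r.getVert i) = Lr i) (γ : V → ℕ) :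
    ((∀ x, γ x ∈ L x) ∧ ∀ x y, G.Adj x y → γ x ≠ γ y) ↔
      IsPathListColoring p.length Lp (γ ∘ p.getVert) ∧
        IsPathListColoring q.length Lq (γ ∘ q.getVert) ∧
          IsPathListColoring r.length Lr (γ ∘ r.getVert) := by
  constructor
  · rintro ⟨hL, hadj⟩
    have along : ∀ (w : G.Walk u v) (Lw : ℕ → Finset ℕ), (∀ i ≤ w.length, L (w.getVert i) = Lw i) →
        IsPathListColoring w.length Lw (γ ∘ w.getVert) := fun w Lw hLw =>
      ⟨fun i hi => hLw i hi ▸ hL _, fun i hi => hadj _ _ (w.adj_getVert_succ hi)⟩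
    exact ⟨along p Lp hLp, along q Lq hLq, along r Lr hLr⟩
  · rintro ⟨hcp, hcq, hcr⟩
    refine ⟨Θ.forall_of_getVert (fun i hi => hLp i hi ▸ hcp.1 i hi)
      (fun i hi => hLq i hi ▸ hcq.1 i hi) (fun i hi => hLr i hi ▸ hcr.1 i hi), fun x y hxy => ?_⟩
    rcases (Θ.cover_edgeSet s(x, y)).mp hxy with h | h | h
    exacts [Walk.apply_ne_of_mk_mem_edges hcp.2 h, Walk.apply_ne_of_mk_mem_edges hcq.2 h,
      Walk.apply_ne_of_mk_mem_edges hcr.2 h]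

theorem colCount_pair [Fintype V] (Θ : IsTheta p q r) {c c' : ℕ} (hc : c ≠ c')
    (hp : Even p.length) (hq : Even q.length) (hr : Even r.length) :
    colCount G (fun _ => {c, c'}) = 2 := by
  classical
  have glue : ∀ d d', ∃ γ : V → ℕ, (∀ i ≤ p.length, γ (p.getVert i) = altColoring d d' i) ∧
      (∀ i ≤ q.length, γ (q.getVert i) = altColoring d d' i) ∧
        ∀ i ≤ r.length, γ (r.getVert i) = altColoring d d' i := fun d d' =>
    Θ.exists_extension _ _ _ rfl rfl
      (by rw [altColoring_of_even hp, altColoring_of_even hr])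
      (by rw [altColoring_of_even hq, altColoring_of_even hr])
  obtain ⟨γ₁, h₁p, h₁q, h₁r⟩ := glue c c'
  obtain ⟨γ₂, h₂p, h₂q, h₂r⟩ := glue c' c
  have hγ₁u : γ₁ u = c := by simpa [altColoring] using h₁p 0 (Nat.zero_le _)
  have hγ₂u : γ₂ u = c' := by simpa [altColoring] using h₂p 0 (Nat.zero_le _)
  have hne : γ₁ ≠ γ₂ := fun h => hc (by rw [← hγ₁u, ← hγ₂u, h])
  have hL : ∀ {a b} (w : G.Walk a b), ∀ i ≤ w.length,
      (fun _ => ({c, c'} : Finset ℕ)) (w.getVert i) = (fun _ => {c, c'}) i := fun _ _ _ => rfl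
  rw [colCount_eq_card (S := {γ₁, γ₂}) fun γ => ?_, Finset.card_pair hne]
  rw [Θ.listColoring_iff (hL p) (hL q) (hL r), Finset.mem_insert, Finset.mem_singleton]
  have hswap : ({c', c} : Finset ℕ) = {c, c'} := Finset.pair_comm c' c
  have colors : ∀ {d d'} (w : G.Walk u v) {γ' : V → ℕ}, d ≠ d' →
      (∀ i ≤ w.length, γ' (w.getVert i) = altColoring d d' i) →
      IsPathListColoring w.length (fun _ => {d, d'}) (γ' ∘ w.getVert) := fun w _ hd h =>
    (IsPathListColoring.congr h).mpr (isPathListColoring_altColoring hd _)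
  have forced : ∀ {d d'} (w : G.Walk u v) {γ' : V → ℕ},
      (∀ i ≤ w.length, γ' (w.getVert i) = altColoring d d' i) →
      IsPathListColoring w.length (fun _ => {d, d'}) (γ ∘ w.getVert) → γ u = d →
      ∀ i ≤ w.length, γ (w.getVert i) = γ' (w.getVert i) := fun w _ h hγ hu i hi =>
    (hγ.eq_altColoring (by simpa using hu) i hi).trans (h i hi).symm
  constructor
  · rintro (rfl | rfl)
    · exact ⟨colors p hc h₁p, colors q hc h₁q, colors r hc h₁r⟩
    · simp only [← hswap]
      exact ⟨colors p hc.symm h₂p, colors q hc.symm h₂q, colors r hc.symm h₂r⟩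
  · rintro ⟨hcp, hcq, hcr⟩
    rcases (by simpa using hcp.1 0 (Nat.zero_le _) : γ u = c ∨ γ u = c') with hu | hu
    · exact .inl (Θ.ext (forced p h₁p hcp hu) (forced q h₁q hcq hu) (forced r h₁r hcr hu))
    · simp only [← hswap] at hcp hcq hcr
      exact .inr (Θ.ext (forced p h₂p hcp hu) (forced q h₂q hcq hu) (forced r h₂r hcr hu))

end IsTheta

end SimpleGraph

def shortList₁ : ℕ → Finset ℕ
  | 0 => {1, 2}
  | 1 => {1, 2}
  | _ => {1, 3}

def shortList₂ : ℕ → Finset ℕ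
  | 0 => {1, 2}
  | 1 => {2, 3}
  | _ => {1, 3}

def longList (m i : ℕ) : Finset ℕ :=
  if i < 2 * m - 2 then {1, 2} else if i = 2 * m - 2 then {2, 3} else {1, 3}

def longColoring (m i : ℕ) : ℕ :=
  if i < 2 * m - 2 then altColoring 1 2 i else altColoring 3 1 i

theorem isPathListColoring_shortList₁ : IsPathListColoring 2 shortList₁ (· + 1) := by
  unfold IsPathListColoring; decide

theorem isPathListColoring_shortList₂ : IsPathListColoring 2 shortList₂ (· + 1) := by
  unfold IsPathListColoring; decide

theorem card_shortList₁ (i : ℕ) : (shortList₁ i).card = 2 := by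
  unfold shortList₁; split <;> rfl

theorem card_shortList₂ (i : ℕ) : (shortList₂ i).card = 2 := by
  unfold shortList₂; split <;> rfl

theorem card_longList (m i : ℕ) : (longList m i).card = 2 := by
  unfold longList; split_ifs <;> rfl

theorem longList_forced {m : ℕ} (hm : 2 ≤ m) :
    ∀ i < 2 * m, ∀ t ∈ longList m (i + 1), t = longColoring m i ∨ t = longColoring m (i + 1) := by
  intro i hi t ht
  simp only [longList, longColoring, altColoring, Nat.even_iff] at *
  split_ifs at * <;> simp only [Finset.mem_insert, Finset.mem_singleton] at ht <;> omega

theorem isPathListColoring_longList {m : ℕ} (hm : 2 ≤ m) :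
    IsPathListColoring (2 * m) (longList m) (longColoring m) := by
  refine ⟨fun i hi => ?_, fun i hi => ?_⟩
  · simp only [longList, longColoring, altColoring, Nat.even_iff]
    split_ifs <;> first | omega | simp
  · simp only [longColoring, altColoring, Nat.even_iff]
    split_ifs <;> omega

theorem eq_of_isPathListColoring_theta {m : ℕ} (hm : 2 ≤ m) {fp fq fr : ℕ → ℕ}
    (hp : IsPathListColoring 2 shortList₁ fp) (hq : IsPathListColoring 2 shortList₂ fq)
    (hr : IsPathListColoring (2 * m) (longList m) fr)
    (hu₁ : fp 0 = fr 0) (hu₂ : fq 0 = fr 0) (hv₁ : fp 2 = fr (2 * m)) (hv₂ : fq 2 = fr (2 * m)) :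
    (∀ i ≤ 2, fp i = i + 1) ∧ (∀ i ≤ 2, fq i = i + 1) ∧ ∀ i ≤ 2 * m, fr i = longColoring m i := by
  have hp₀ := hp.1 0 (by omega)
  have hp₁ := hp.1 1 (by omega)
  have hq₁ := hq.1 1 (by omega)
  have hrv := hr.1 (2 * m) le_rfl
  simp only [shortList₁, shortList₂, longList, Finset.mem_insert, Finset.mem_singleton]
    at hp₀ hp₁ hq₁ hrv
  simp only [show ¬2 * m < 2 * m - 2 by omega, show 2 * m ≠ 2 * m - 2 by omega, if_false,
    Finset.mem_insert, Finset.mem_singleton] at hrv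
  have hp₀₁ : fp 0 ≠ fp 1 := hp.2 0 (by omega)
  have hp₁₂ : fp 1 ≠ fp 2 := hp.2 1 (by omega)
  have hq₀₁ : fq 0 ≠ fq 1 := hq.2 0 (by omega)
  have hq₁₂ : fq 1 ≠ fq 2 := hq.2 1 (by omega)
  -- color 2 at `u` forces 1 at the middle of `p`, hence 3 at `v`,
  -- leaving no color for the middle of `q`
  have hu : fr 0 = 1 := by omega
  have hfr := hr.eq_of_forced (by simp [hu, longColoring, altColoring]; omega) (longList_forced hm)
  have hv : fr (2 * m) = 3 := by
    rw [hfr _ le_rfl]; simp [longColoring, altColoring]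
  refine ⟨fun i hi => ?_, fun i hi => ?_, hfr⟩ <;> interval_cases i <;> omega

theorem SimpleGraph.IsTheta.exists_colCount_eq_one {V : Type*} [Fintype V] {G : SimpleGraph V}
    {u v : V} {p q r : G.Walk u v} (Θ : G.IsTheta p q r) {m : ℕ} (hm : 2 ≤ m)
    (hpl : p.length = 2) (hql : q.length = 2) (hrl : r.length = 2 * m) :
    ∃ L : V → Finset ℕ, (∀ x, (L x).card = 2) ∧ colCount G L = 1 := by
  classical
  have hL₀ : longList m 0 = {1, 2} := if_pos (by omega)
  have hL₁ : longList m (2 * m) = {1, 3} := by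
    rw [longList, if_neg (by omega), if_neg (by omega)]
  have hc₀ : longColoring m 0 = 1 := if_pos (by omega)
  have hc₁ : longColoring m (2 * m) = 3 := by simp [longColoring, altColoring]
  obtain ⟨L, hLp, hLq, hLr⟩ := Θ.exists_extension shortList₁ shortList₂ (longList m)
    hL₀.symm hL₀.symm (by rw [hpl, hrl, hL₁]; rfl) (by rw [hql, hrl, hL₁]; rfl)
  obtain ⟨γ₀, hγp, hγq, hγr⟩ := Θ.exists_extension (· + 1) (· + 1) (longColoring m)
    hc₀.symm hc₀.symm (by rw [hpl, hrl, hc₁]) (by rw [hql, hrl, hc₁])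
  refine ⟨L, Θ.forall_of_getVert (fun i hi => ?_) (fun i hi => ?_) (fun i hi => ?_), ?_⟩
  · rw [hLp i hi, card_shortList₁]
  · rw [hLq i hi, card_shortList₂]
  · rw [hLr i hi, card_longList]
  rw [colCount_eq_card (S := {γ₀}) fun γ => ?_, Finset.card_singleton]
  rw [Θ.listColoring_iff hLp hLq hLr, Finset.mem_singleton]
  rw [hpl] at hγp ⊢
  rw [hql] at hγq ⊢
  rw [hrl] at hγr ⊢
  constructor
  · rintro rfl
    exact ⟨(IsPathListColoring.congr hγp).mpr isPathListColoring_shortList₁,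
      (IsPathListColoring.congr hγq).mpr isPathListColoring_shortList₂,
      (IsPathListColoring.congr hγr).mpr (isPathListColoring_longList hm)⟩
  · rintro ⟨hcp, hcq, hcr⟩
    obtain ⟨hfp, hfq, hfr⟩ := eq_of_isPathListColoring_theta hm hcp hcq hcr (by simp) (by simp)
      (by simp [p.getVert_of_length_le hpl.le, r.getVert_of_length_le hrl.le])
      (by simp [q.getVert_of_length_le hql.le, r.getVert_of_length_le hrl.le])
    exact Θ.ext (fun i hi => (hfp i (hpl ▸ hi)).trans (hγp i (hpl ▸ hi)).symm)
      (fun i hi => (hfq i (hql ▸ hi)).trans (hγq i (hql ▸ hi)).symm)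
      (fun i hi => (hfr i (hrl ▸ hi)).trans (hγr i (hrl ▸ hi)).symm)

theorem stmt13_general {V : Type*} [Fintype V] (G : SimpleGraph V) (m : ℕ) (hm : 2 ≤ m)
    (u v : V) (p q r : G.Walk u v)
    (hp : p.IsPath) (hq : q.IsPath) (hr : r.IsPath)
    (hpl : p.length = 2) (hql : q.length = 2) (hrl : r.length = 2 * m)
    (hpq : ∀ x, x ∈ p.support → x ∈ q.support → x = u ∨ x = v)
    (hpr : ∀ x, x ∈ p.support → x ∈ r.support → x = u ∨ x = v)
    (hqr : ∀ x, x ∈ q.support → x ∈ r.support → x = u ∨ x = v)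
    (hvert : ∀ x : V, x ∈ p.support ∨ x ∈ q.support ∨ x ∈ r.support)
    (hedge : ∀ e, e ∈ G.edgeSet ↔ e ∈ p.edges ∨ e ∈ q.edges ∨ e ∈ r.edges) :
    (∃ L : V → Finset ℕ, (∀ x, (L x).card = 2) ∧ colCount G L = 1) ∧
      colCount G (fun _ => ({1, 2} : Finset ℕ)) = 2 := by
  have Θ : G.IsTheta p q r := ⟨hp, hq, hr, hpq, hpr, hqr, hvert, hedge⟩
  exact ⟨Θ.exists_colCount_eq_one hm hpl hql hrl,
    Θ.colCount_pair (by decide) (by simp [hpl]) (by simp [hql]) (hrl ▸ even_two_mul m)⟩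

theorem stmt13 {V : Type*} [Fintype V] (G : SimpleGraph V) (m : ℕ) (hm : 2 ≤ m)
    (u v : V) (huv : u ≠ v) (p q r : G.Walk u v)
    (hp : p.IsPath) (hq : q.IsPath) (hr : r.IsPath)
    (hpl : p.length = 2) (hql : q.length = 2) (hrl : r.length = 2 * m)
    (hpq : ∀ x, x ∈ p.support → x ∈ q.support → x = u ∨ x = v)
    (hpr : ∀ x, x ∈ p.support → x ∈ r.support → x = u ∨ x = v)
    (hqr : ∀ x, x ∈ q.support → x ∈ r.support → x = u ∨ x = v)
    (hvert : ∀ x : V, x ∈ p.support ∨ x ∈ q.support ∨ x ∈ r.support)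
    (hedge : ∀ e, e ∈ G.edgeSet ↔ e ∈ p.edges ∨ e ∈ q.edges ∨ e ∈ r.edges) :
    (∃ L : V → Finset ℕ, (∀ x, (L x).card = 2) ∧ colCount G L = 1) ∧
      colCount G (fun _ => ({1, 2} : Finset ℕ)) = 2 :=
  stmt13_general G m hm u v p q r hp hq hr hpl hql hrl hpq hpr hqr hvert hedge
end

section
/- Let L be a list assignment for K_{n,n^n} with |L(v)| ≥ n for every vertex v, and suppose col(K_{n,n^n}, L) = 0. Then: the lists of the n vertices on the small side are pairwise disjoint n-element sets, and the lists of the n^n vertices on the large side are exactly the n^n distinct transversals, each consisting of exactly one color from each small-side list. -/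
open SimpleGraph

/-!
Fix a colouring `f` of the small side from its lists (a choice function of the small lists). Since
no proper colouring exists, `f` cannot be extended, so some large-side list lies inside the image of
`f`. That list has at least `n` colours, so `f` is injective; this forces the small lists to be
pairwise disjoint and the blocking list to be exactly the image of `f`. Hence the transversals, of
which there are `∏ |L a| ≥ n ^ n`, embed into the `n ^ n` large-side lists: every small list has
exactly `n` colours and the large-side lists are precisely the transversals, each occurring once.
-/

open Finset Function

theorem eq_of_forall_le_of_prod_le_pow {ι : Type*} {s : Finset ι} {a : ι → ℕ} {n : ℕ}
    (hn : 0 < n) (hle : ∀ i ∈ s, n ≤ a i) (hprod : ∏ i ∈ s, a i ≤ n ^ s.card) :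
    ∀ i ∈ s, a i = n := by
  by_contra! ⟨i, hi, hne⟩
  have : ∏ _i ∈ s, n < ∏ i ∈ s, a i :=
    prod_lt_prod (fun _ _ => hn) hle ⟨i, hi, (hle i hi).lt_of_ne' hne⟩
  rw [prod_const] at this
  omega

theorem colCount_eq_zero_iff {V : Type*} [Fintype V] {G : SimpleGraph V} {L : V → Finset ℕ} :
    colCount G L = 0 ↔ ∀ γ : V → ℕ, (∀ v, γ v ∈ L v) → ∃ v w, G.Adj v w ∧ γ v = γ w := by
  simp [colCount, filter_eq_empty_iff]

theorem exists_subset_image_of_colCount_eq_zero {A B : Type*} [Fintype A] [DecidableEq A]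
    [Fintype B] {L : A ⊕ B → Finset ℕ} (h : colCount (completeBipartiteGraph A B) L = 0) :
    ∀ f ∈ Fintype.piFinset fun a => L (.inl a), ∃ b, L (.inr b) ⊆ univ.image f := by
  intro f hf
  rw [Fintype.mem_piFinset] at hf
  by_contra! hmiss
  choose g hgL hgf using fun b => not_subset.mp (hmiss b)
  obtain ⟨v, w, hadj, hvw⟩ := colCount_eq_zero_iff.mp h (Sum.elim f g) (Sum.forall.mpr ⟨hf, hgL⟩)
  rcases v with a | b <;> rcases w with a' | b' <;>
    simp only [completeBipartiteGraph_adj, Sum.isLeft_inl, Sum.isLeft_inr, Sum.isRight_inl,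
      Sum.isRight_inr, Bool.false_eq_true, and_false, false_and, or_self, Sum.elim_inl,
      Sum.elim_inr] at hadj hvw
  · exact hgf b' (hvw ▸ mem_image_of_mem f (mem_univ a))
  · exact hgf b (hvw ▸ mem_image_of_mem f (mem_univ a'))

section Transversals

variable {ι α : Type*} [Fintype ι] [DecidableEq ι] {S : ι → Finset α}

theorem pairwise_disjoint_of_forall_injective (hne : ∀ i, (S i).Nonempty)
    (hinj : ∀ f ∈ Fintype.piFinset S, Injective f) : Pairwise (Disjoint on S) := by
  intro i j hij
  rw [onFun, Finset.disjoint_left]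
  intro c hci hcj
  choose g hg using hne
  let f := update (update g i c) j c
  have hf : f ∈ Fintype.piFinset S := by
    rw [Fintype.mem_piFinset]
    intro k
    by_cases hkj : k = j
    · subst hkj; simpa [f] using hcj
    by_cases hki : k = i
    · subst hki; simpa [f, hkj] using hci
    simpa [f, hkj, hki] using hg k
  exact hij (hinj f hf (by simp [f, hij]))

variable [DecidableEq α]

theorem eq_of_mem_piFinset_of_image_eq (hS : Pairwise (Disjoint on S)) {f g : ι → α}
    (hf : f ∈ Fintype.piFinset S) (hg : g ∈ Fintype.piFinset S)
    (h : univ.image f = univ.image g) : f = g := by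
  rw [Fintype.mem_piFinset] at hf hg
  funext i
  obtain ⟨j, -, hji⟩ := mem_image.mp (h ▸ mem_image_of_mem f (mem_univ i))
  obtain rfl : j = i := hS.eq (not_disjoint_iff.mpr ⟨f i, hji ▸ hg j, hf i⟩)
  exact hji.symm

theorem image_inter_eq_singleton (hS : Pairwise (Disjoint on S)) {f : ι → α}
    (hf : f ∈ Fintype.piFinset S) (i : ι) : univ.image f ∩ S i = {f i} := by
  rw [Fintype.mem_piFinset] at hf
  ext x
  simp only [mem_inter, mem_image, mem_univ, true_and, mem_singleton]
  constructor
  · rintro ⟨⟨j, rfl⟩, hx⟩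
    rw [hS.eq (not_disjoint_iff.mpr ⟨f j, hf j, hx⟩)]
  · rintro rfl
    exact ⟨⟨i, rfl⟩, hf i⟩

variable (S) in
def transversals : Finset (Finset α) :=
  (Fintype.piFinset S).image fun f => univ.image f

theorem mem_transversals {t : Finset α} :
    t ∈ transversals S ↔ ∃ f ∈ Fintype.piFinset S, univ.image f = t :=
  mem_image

theorem card_transversals (hS : Pairwise (Disjoint on S)) :
    (transversals S).card = ∏ i, (S i).card := by
  rw [transversals, card_image_of_injOn, Fintype.card_piFinset]
  exact fun f hf g hg => eq_of_mem_piFinset_of_image_eq hS hf hg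

section Cover

variable {β : Type*} {T : β → Finset α}

theorem injective_of_mem_piFinset_of_cover (hT : ∀ b, Fintype.card ι ≤ (T b).card)
    (hcov : ∀ f ∈ Fintype.piFinset S, ∃ b, T b ⊆ univ.image f) {f : ι → α}
    (hf : f ∈ Fintype.piFinset S) : Injective f := by
  obtain ⟨b, hb⟩ := hcov f hf
  have : (univ.image f).card = (univ : Finset ι).card :=
    le_antisymm card_image_le ((hT b).trans (card_le_card hb))
  simpa using injOn_of_card_image_eq this

theorem pairwise_disjoint_of_cover (hS : ∀ i, Fintype.card ι ≤ (S i).card)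
    (hT : ∀ b, Fintype.card ι ≤ (T b).card)
    (hcov : ∀ f ∈ Fintype.piFinset S, ∃ b, T b ⊆ univ.image f) : Pairwise (Disjoint on S) :=
  pairwise_disjoint_of_forall_injective
    (fun i => card_pos.mp ((Fintype.card_pos_iff.mpr ⟨i⟩).trans_le (hS i)))
    (fun _ => injective_of_mem_piFinset_of_cover hT hcov)

variable [Fintype β]

theorem transversals_subset_image_of_cover (hT : ∀ b, Fintype.card ι ≤ (T b).card)
    (hcov : ∀ f ∈ Fintype.piFinset S, ∃ b, T b ⊆ univ.image f) :
    transversals S ⊆ univ.image T := by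
  intro t ht
  obtain ⟨f, hf, rfl⟩ := mem_transversals.mp ht
  obtain ⟨b, hb⟩ := hcov f hf
  refine mem_image.mpr ⟨b, mem_univ b, eq_of_subset_of_card_le hb ?_⟩
  rw [card_image_of_injective _ (injective_of_mem_piFinset_of_cover hT hcov hf), card_univ]
  exact hT b

theorem card_eq_of_cover (hS : ∀ i, Fintype.card ι ≤ (S i).card)
    (hT : ∀ b, Fintype.card ι ≤ (T b).card)
    (hcov : ∀ f ∈ Fintype.piFinset S, ∃ b, T b ⊆ univ.image f)
    (hβ : Fintype.card β = Fintype.card ι ^ Fintype.card ι) (i : ι) :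
    (S i).card = Fintype.card ι := by
  have hprod : ∏ i, (S i).card ≤ Fintype.card ι ^ (univ : Finset ι).card := by
    calc ∏ i, (S i).card = (transversals S).card :=
          (card_transversals (pairwise_disjoint_of_cover hS hT hcov)).symm
      _ ≤ (univ.image T).card := card_le_card (transversals_subset_image_of_cover hT hcov)
      _ ≤ Fintype.card β := card_image_le
      _ = _ := hβ
  exact eq_of_forall_le_of_prod_le_pow (Fintype.card_pos_iff.mpr ⟨i⟩) (fun i _ => hS i) hprod
    i (mem_univ i)

theorem card_transversals_of_cover (hS : ∀ i, Fintype.card ι ≤ (S i).card)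
    (hT : ∀ b, Fintype.card ι ≤ (T b).card)
    (hcov : ∀ f ∈ Fintype.piFinset S, ∃ b, T b ⊆ univ.image f)
    (hβ : Fintype.card β = Fintype.card ι ^ Fintype.card ι) :
    (transversals S).card = Fintype.card β := by
  rw [card_transversals (pairwise_disjoint_of_cover hS hT hcov), hβ,
    prod_congr rfl fun i _ => card_eq_of_cover hS hT hcov hβ i, prod_const, card_univ]

theorem image_eq_transversals_of_cover (hS : ∀ i, Fintype.card ι ≤ (S i).card)
    (hT : ∀ b, Fintype.card ι ≤ (T b).card)
    (hcov : ∀ f ∈ Fintype.piFinset S, ∃ b, T b ⊆ univ.image f)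
    (hβ : Fintype.card β = Fintype.card ι ^ Fintype.card ι) :
    univ.image T = transversals S :=
  (eq_of_subset_of_card_le (transversals_subset_image_of_cover hT hcov)
    (card_image_le.trans (card_transversals_of_cover hS hT hcov hβ).ge)).symm

theorem injective_of_cover (hS : ∀ i, Fintype.card ι ≤ (S i).card)
    (hT : ∀ b, Fintype.card ι ≤ (T b).card)
    (hcov : ∀ f ∈ Fintype.piFinset S, ∃ b, T b ⊆ univ.image f)
    (hβ : Fintype.card β = Fintype.card ι ^ Fintype.card ι) : Injective T := by
  have : (univ.image T).card = (univ : Finset β).card := by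
    rw [image_eq_transversals_of_cover hS hT hcov hβ, card_transversals_of_cover hS hT hcov hβ,
      card_univ]
  simpa using injOn_of_card_image_eq this

end Cover

end Transversals

theorem stmt16_general (n : ℕ) (L : Fin n ⊕ Fin (n ^ n) → Finset ℕ)
    (hcard : ∀ v, n ≤ (L v).card)
    (hzero : colCount (completeBipartiteGraph (Fin n) (Fin (n ^ n))) L = 0) :
    (∀ i : Fin n, (L (.inl i)).card = n) ∧
    (∀ i j : Fin n, i ≠ j → Disjoint (L (.inl i)) (L (.inl j))) ∧
    (∀ b : Fin (n ^ n),
      L (.inr b) ⊆ Finset.univ.biUnion (fun i : Fin n => L (.inl i)) ∧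
      ∀ i : Fin n, (L (.inr b) ∩ L (.inl i)).card = 1) ∧
    (∀ b b' : Fin (n ^ n), b ≠ b' → L (.inr b) ≠ L (.inr b')) := by
  have hS : ∀ i, Fintype.card (Fin n) ≤ (L (.inl i)).card := by simpa using fun i => hcard (.inl i)
  have hT : ∀ b, Fintype.card (Fin n) ≤ (L (.inr b)).card := by simpa using fun b => hcard (.inr b)
  have hβ : Fintype.card (Fin (n ^ n)) = Fintype.card (Fin n) ^ Fintype.card (Fin n) := by simp
  have hcov := exists_subset_image_of_colCount_eq_zero hzero
  have hdisj := pairwise_disjoint_of_cover hS hT hcov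
  refine ⟨fun i => by simpa using card_eq_of_cover hS hT hcov hβ i, fun i j hij => hdisj hij,
    fun b => ?_, fun b b' => (injective_of_cover hS hT hcov hβ).ne⟩
  obtain ⟨f, hf, hfb⟩ := mem_transversals.mp
    (image_eq_transversals_of_cover hS hT hcov hβ ▸ mem_image_of_mem _ (mem_univ b))
  rw [← hfb]
  refine ⟨fun x hx => ?_, fun i => by rw [image_inter_eq_singleton hdisj hf, card_singleton]⟩
  obtain ⟨i, -, rfl⟩ := mem_image.mp hx
  exact mem_biUnion.mpr ⟨i, mem_univ i, Fintype.mem_piFinset.mp hf i⟩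

theorem stmt16 (n : ℕ) (hn : 1 ≤ n) (L : Fin n ⊕ Fin (n ^ n) → Finset ℕ)
    (hcard : ∀ v, n ≤ (L v).card)
    (hzero : colCount (completeBipartiteGraph (Fin n) (Fin (n ^ n))) L = 0) :
    (∀ i : Fin n, (L (.inl i)).card = n) ∧
    (∀ i j : Fin n, i ≠ j → Disjoint (L (.inl i)) (L (.inl j))) ∧
    (∀ b : Fin (n ^ n),
      L (.inr b) ⊆ Finset.univ.biUnion (fun i : Fin n => L (.inl i)) ∧
      ∀ i : Fin n, (L (.inr b) ∩ L (.inl i)).card = 1) ∧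
    (∀ b b' : Fin (n ^ n), b ≠ b' → L (.inr b) ≠ L (.inr b')) :=
  stmt16_general n L hcard hzero
end
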